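/- arXiv:2009.00079 — 13 statements merged into one kernel-verified Lean document; each statement's English description precedes it below -/
import Mathlib

section
/- An involution τ of [n] is of the form σ⁻¹ ⊖ σ (if n is even) or σ⁻¹ ⊖ 1 ⊖ σ (if n is odd) for some permutation σ of [⌊n/2⌋], if and only if τ has no two independent cycles, where two cycles (a,b),(c,d) with a ≤ b = τ(a), c ≤ d = τ(c) are independent if b < c. -/
/-!
Call `x` a lower endpoint of the involution `τ` if `x ≤ τ x` and an upper endpoint if
`τ x ≤ x`; `τ` exchanges the two kinds, and the fixed points are those of both kinds. Having no
two independent cycles says exactly that every lower endpoint lies below every upper endpoint.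
Then the lower endpoints form an initial segment and the upper endpoints a final segment of
the same size, overlapping in at most one (fixed) point, so they are `[0, ⌈n/2⌉)` and
`[⌊n/2⌋, n)`.
This is the same as saying that `τ` exchanges the first and the last `⌊n/2⌋` points, which is
the skew form.
-/

open Finset

namespace Fin

theorem mem_iff_lt_card_of_isLowerSet {n : ℕ} {s : Finset (Fin n)}
    (hs : IsLowerSet (s : Set (Fin n))) (x : Fin n) : x ∈ s ↔ (x : ℕ) < #s := by
  constructor
  · intro hx
    have hle := card_le_card fun y hy => hs (mem_Iic.mp hy) hx
    rwa [card_Iic] at hle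
  · intro hx
    by_contra hxs
    have hle := card_le_card fun y (hy : y ∈ s) =>
      mem_Iio.mpr (lt_of_not_ge fun hxy => hxs (hs hxy hy))
    rw [card_Iio] at hle
    omega

theorem mem_iff_le_of_isUpperSet {n : ℕ} {s : Finset (Fin n)}
    (hs : IsUpperSet (s : Set (Fin n))) (x : Fin n) : x ∈ s ↔ n - #s ≤ (x : ℕ) := by
  have hcompl := mem_iff_lt_card_of_isLowerSet (s := sᶜ) (by simpa using hs.compl) x
  rw [mem_compl, card_compl, Fintype.card_fin] at hcompl
  rw [← not_lt, ← hcompl, not_not]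

end Fin

namespace Equiv.Perm

section Endpoints

variable {α : Type*} [LinearOrder α] [Fintype α] {τ : Perm α}

def lowerEndpoints (τ : Perm α) : Finset α := univ.filter fun x => x ≤ τ x

def upperEndpoints (τ : Perm α) : Finset α := univ.filter fun x => τ x ≤ x

@[simp]
theorem mem_lowerEndpoints {x : α} : x ∈ τ.lowerEndpoints ↔ x ≤ τ x := by
  simp [lowerEndpoints]

@[simp]
theorem mem_upperEndpoints {x : α} : x ∈ τ.upperEndpoints ↔ τ x ≤ x := by
  simp [upperEndpoints]

theorem lowerEndpoints_union_upperEndpoints :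
    τ.lowerEndpoints ∪ τ.upperEndpoints = univ := by
  ext x
  simpa using le_total x (τ x)

theorem upperEndpoints_eq_map (hτ : Function.Involutive τ) :
    τ.upperEndpoints = τ.lowerEndpoints.map τ.toEmbedding := by
  ext y
  simp only [mem_upperEndpoints, mem_map, mem_lowerEndpoints, Equiv.coe_toEmbedding]
  exact ⟨fun hy => ⟨τ y, by rwa [hτ], hτ y⟩, by rintro ⟨x, hx, rfl⟩; rwa [hτ]⟩

theorem card_upperEndpoints (hτ : Function.Involutive τ) :
    #τ.upperEndpoints = #τ.lowerEndpoints := by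
  rw [upperEndpoints_eq_map hτ, card_map]

def NoIndependentCycles (τ : Perm α) : Prop :=
  ∀ a c : α, a ≤ τ a → c ≤ τ c → ¬ τ a < c

namespace NoIndependentCycles

variable (h : τ.NoIndependentCycles) (hτ : Function.Involutive τ)
include h hτ

theorem le_of_mem_lowerEndpoints_of_mem_upperEndpoints {c b : α} (hc : c ∈ τ.lowerEndpoints)
    (hb : b ∈ τ.upperEndpoints) : c ≤ b := by
  rw [mem_upperEndpoints] at hb
  have := h (τ b) c (by rwa [hτ]) (mem_lowerEndpoints.mp hc)
  rwa [hτ, not_lt] at this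

theorem isLowerSet_lowerEndpoints : IsLowerSet (τ.lowerEndpoints : Set α) := by
  intro x y hyx hx
  rw [mem_coe, mem_lowerEndpoints] at hx ⊢
  by_contra hy
  have hxy := h.le_of_mem_lowerEndpoints_of_mem_upperEndpoints hτ
    (mem_lowerEndpoints.mpr hx) (mem_upperEndpoints.mpr (le_of_not_ge hy))
  exact hy (le_antisymm hyx hxy ▸ hx)

theorem isUpperSet_upperEndpoints : IsUpperSet (τ.upperEndpoints : Set α) := by
  intro x y hxy hx
  rw [mem_coe, mem_upperEndpoints] at hx ⊢
  by_contra hy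
  have hyx := h.le_of_mem_lowerEndpoints_of_mem_upperEndpoints hτ
    (mem_lowerEndpoints.mpr (le_of_not_ge hy)) (mem_upperEndpoints.mpr hx)
  exact hy (le_antisymm hyx hxy ▸ hx)

theorem card_lowerEndpoints_inter_upperEndpoints_le_one :
    #(τ.lowerEndpoints ∩ τ.upperEndpoints) ≤ 1 :=
  card_le_one.mpr fun p hp q hq => by
    rw [mem_inter] at hp hq
    exact le_antisymm (h.le_of_mem_lowerEndpoints_of_mem_upperEndpoints hτ hp.1 hq.2)
      (h.le_of_mem_lowerEndpoints_of_mem_upperEndpoints hτ hq.1 hp.2)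

end NoIndependentCycles

end Endpoints

section Halves

variable {n : ℕ} {τ : Perm (Fin n)}

def SwapsHalves (τ : Perm (Fin n)) : Prop :=
  (∀ x : Fin n, (x : ℕ) < n / 2 → n - n / 2 ≤ (τ x : ℕ)) ∧
    ∀ x : Fin n, n - n / 2 ≤ (x : ℕ) → (τ x : ℕ) < n / 2

namespace NoIndependentCycles

variable (h : τ.NoIndependentCycles) (hτ : Function.Involutive τ)
include h hτ

theorem card_lowerEndpoints : #τ.lowerEndpoints = n - n / 2 := by
  have hunion := card_union_add_card_inter τ.lowerEndpoints τ.upperEndpoints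
  rw [lowerEndpoints_union_upperEndpoints, card_univ, Fintype.card_fin,
    card_upperEndpoints hτ] at hunion
  have := h.card_lowerEndpoints_inter_upperEndpoints_le_one hτ
  omega

theorem le_apply_iff (x : Fin n) : x ≤ τ x ↔ (x : ℕ) < n - n / 2 := by
  rw [← mem_lowerEndpoints, Fin.mem_iff_lt_card_of_isLowerSet (h.isLowerSet_lowerEndpoints hτ),
    h.card_lowerEndpoints hτ]

theorem apply_le_iff (x : Fin n) : τ x ≤ x ↔ n / 2 ≤ (x : ℕ) := by
  rw [← mem_upperEndpoints, Fin.mem_iff_le_of_isUpperSet (h.isUpperSet_upperEndpoints hτ),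
    card_upperEndpoints hτ, h.card_lowerEndpoints hτ]
  omega

theorem swapsHalves : τ.SwapsHalves := by
  constructor
  · intro x hx
    by_contra hlt
    have hτx : τ x ≤ x := by simpa [hτ x] using (h.le_apply_iff hτ (τ x)).mpr (by omega)
    have := (h.apply_le_iff hτ x).mp hτx
    omega
  · intro x hx
    by_contra hle
    have hxτ : x ≤ τ x := by simpa [hτ x] using (h.apply_le_iff hτ (τ x)).mpr (by omega)
    have := (h.le_apply_iff hτ x).mp hxτ
    omega

end NoIndependentCycles

theorem SwapsHalves.noIndependentCycles (hs : τ.SwapsHalves) (hτ : Function.Involutive τ) :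
    τ.NoIndependentCycles := by
  intro a c ha hc hlt
  rw [Fin.le_def] at ha hc
  rw [Fin.lt_def] at hlt
  have hc_lt : (c : ℕ) < n - n / 2 := by
    by_contra hge
    have := hs.2 c (by omega)
    omega
  have ha_ge : n / 2 ≤ (τ a : ℕ) := by
    by_contra hlt'
    have := hs.1 (τ a) (by omega)
    rw [hτ] at this
    omega
  omega

theorem exists_skew_iff_swapsHalves (hτ : Function.Involutive τ) :
    (∃ σ : Perm (Fin (n / 2)), ∀ i : Fin (n / 2),
        (τ ⟨i, by omega⟩ : ℕ) = n - n / 2 + σ.symm i ∧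
          (τ ⟨n - n / 2 + i, by omega⟩ : ℕ) = σ i) ↔
      τ.SwapsHalves := by
  constructor
  · rintro ⟨σ, hσ⟩
    constructor
    · intro x hx
      have := (hσ ⟨x, hx⟩).1
      rw [Fin.eta] at this
      omega
    · intro x hx
      have := (hσ ⟨x - (n - n / 2), by omega⟩).2
      rw [show (⟨n - n / 2 + (x - (n - n / 2)), _⟩ : Fin n) = x from
        Fin.ext (Nat.add_sub_cancel' hx)] at this
      omega
  · rintro ⟨hlow, hhigh⟩
    have hlow' (i : Fin (n / 2)) := hlow ⟨i, by omega⟩ i.2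
    refine ⟨⟨fun i => ⟨τ ⟨n - n / 2 + i, by omega⟩, hhigh _ (by simp)⟩,
      fun i => ⟨τ ⟨i, by omega⟩ - (n - n / 2), by
        have := hlow' i
        have := (τ ⟨i, by omega⟩).2
        omega⟩,
      fun i => ?_, fun i => ?_⟩, fun i => ⟨?_, rfl⟩⟩
    · ext
      simp [hτ _]
    · ext
      simp [Nat.add_sub_cancel' (hlow' i), hτ _]
    · have := hlow' i
      simp only [Equiv.coe_fn_symm_mk]
      omega

end Halves

end Equiv.Perm

/-- An involution `τ` of `[n]` is of the form `σ⁻¹ ⊖ σ` (n even) or `σ⁻¹ ⊖ 1 ⊖ σ`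
(n odd) for some `σ ∈ S_{⌊n/2⌋}` iff `τ` has no two independent cycles, where cycles
`(a, τ a)` with `a ≤ τ a` and `(c, τ c)` with `c ≤ τ c` are independent if `τ a < c`. -/
theorem skew_form_iff_no_independent_cycles (n : ℕ) (τ : Equiv.Perm (Fin n))
    (hτ : Function.Involutive ⇑τ) :
    (∃ σ : Equiv.Perm (Fin (n / 2)), ∀ i : Fin (n / 2),
        ((τ ⟨i.1, by have := i.2; omega⟩ : Fin n) : ℕ) = (n - n / 2) + ((σ.symm i : Fin (n / 2)) : ℕ) ∧
        ((τ ⟨n - n / 2 + i.1, by have := i.2; omega⟩ : Fin n) : ℕ) = ((σ i : Fin (n / 2)) : ℕ)) ↔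
    ∀ a c : Fin n, a ≤ τ a → c ≤ τ c → ¬ τ a < c := by
  rw [Equiv.Perm.exists_skew_iff_swapsHalves hτ]
  exact ⟨(·.noIndependentCycles hτ),
    fun h => Equiv.Perm.NoIndependentCycles.swapsHalves h hτ⟩
end

section
/- A fixed-point-free involution ρ of [2n] satisfies ρ(i) > n for all i ∈ [n] if and only if ρ = σ⁻¹ ⊖ σ for some permutation σ of [n]. -/
/-- A fixed-point-free involution `ρ` of `[2n]` satisfies `ρ(i) > n` for all `i ∈ [n]`
iff `ρ = σ⁻¹ ⊖ σ` for some permutation `σ` of `[n]`, i.e. (0-indexed)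
`ρ i = n + σ⁻¹ i` for `i < n` and `ρ (n + j) = σ j` for `j < n`. -/
theorem permutational_matching_iff_skew (n : ℕ) (ρ : Equiv.Perm (Fin (2 * n)))
    (h1 : Function.Involutive ⇑ρ) (h2 : ∀ i, ρ i ≠ i) :
    (∀ i : Fin (2 * n), (i : ℕ) < n → n ≤ ((ρ i : Fin (2 * n)) : ℕ)) ↔
    ∃ σ : Equiv.Perm (Fin n), ∀ i : Fin n,
      ((ρ ⟨i.1, by have := i.2; omega⟩ : Fin (2 * n)) : ℕ) = n + ((σ.symm i : Fin n) : ℕ) ∧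
      ((ρ ⟨n + i.1, by have := i.2; omega⟩ : Fin (2 * n)) : ℕ) = ((σ i : Fin n) : ℕ) := by
  constructor
  · intro h
    -- f maps the first half (indexed by Fin n) into the second half
    set f : Fin n → Fin n := fun i =>
      ⟨(ρ ⟨i.1, by have := i.2; omega⟩ : Fin (2 * n)).1 - n, by
        have hn : n ≤ (ρ ⟨i.1, by have := i.2; omega⟩ : Fin (2 * n)).1 := h _ i.2
        have hlt := (ρ ⟨i.1, by have := i.2; omega⟩ : Fin (2 * n)).2
        omega⟩ with hfdef
    have hfinj : Function.Injective f := by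
      intro a b hab
      have hna : n ≤ (ρ ⟨a.1, by have := a.2; omega⟩ : Fin (2 * n)).1 := h _ a.2
      have hnb : n ≤ (ρ ⟨b.1, by have := b.2; omega⟩ : Fin (2 * n)).1 := h _ b.2
      have hab' : (ρ ⟨a.1, by have := a.2; omega⟩ : Fin (2 * n)) =
          (ρ ⟨b.1, by have := b.2; omega⟩ : Fin (2 * n)) := by
        apply Fin.ext
        have := congrArg Fin.val hab
        simp only [hfdef] at this
        omega
      have hv := congrArg Fin.val (ρ.injective hab')
      exact Fin.ext hv
    have hfsurj : Function.Surjective f := Finite.surjective_of_injective hfinj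
    -- ρ maps the second half into the first half
    have hlow : ∀ j : Fin n, (ρ ⟨n + j.1, by have := j.2; omega⟩ : Fin (2 * n)).1 < n := by
      intro j
      obtain ⟨i, hi⟩ := hfsurj j
      have hna : n ≤ (ρ ⟨i.1, by have := i.2; omega⟩ : Fin (2 * n)).1 := h _ i.2
      have hval : (ρ ⟨i.1, by have := i.2; omega⟩ : Fin (2 * n)) =
          ⟨n + j.1, by have := j.2; omega⟩ := by
        apply Fin.ext
        have := congrArg Fin.val hi
        simp only [hfdef] at this
        simp only []
        omega
      have := h1 ⟨i.1, by have := i.2; omega⟩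
      rw [hval] at this
      rw [this]
      exact i.2
    set g : Fin n → Fin n := fun j =>
      ⟨(ρ ⟨n + j.1, by have := j.2; omega⟩ : Fin (2 * n)).1, hlow j⟩ with hgdef
    have hginj : Function.Injective g := by
      intro a b hab
      have hab' : (ρ ⟨n + a.1, by have := a.2; omega⟩ : Fin (2 * n)) =
          (ρ ⟨n + b.1, by have := b.2; omega⟩ : Fin (2 * n)) := by
        apply Fin.ext
        have := congrArg Fin.val hab
        simpa [hgdef] using this
      have := congrArg Fin.val (ρ.injective hab')
      simp only [] at this
      exact Fin.ext (by omega)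
    let σ : Equiv.Perm (Fin n) := Equiv.ofBijective g ⟨hginj, Finite.surjective_of_injective hginj⟩
    refine ⟨σ, fun i => ?_⟩
    have hσ : ∀ j : Fin n, (σ j : Fin n).1 = (ρ ⟨n + j.1, by have := j.2; omega⟩ : Fin (2 * n)).1 :=
      fun j => rfl
    constructor
    · -- ρ i = n + σ.symm i
      set k := σ.symm i with hk
      have hsk : σ k = i := Equiv.apply_symm_apply σ i
      have hval : (ρ ⟨n + k.1, by have := k.2; omega⟩ : Fin (2 * n)) =
          ⟨i.1, by have := i.2; omega⟩ := by
        apply Fin.ext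
        have := hσ k
        rw [hsk] at this
        exact this.symm
      have hinv := h1 ⟨n + k.1, by have := k.2; omega⟩
      rw [hval] at hinv
      rw [hinv]
    · exact (hσ i).symm
  · rintro ⟨σ, hσ⟩ i hi
    have := (hσ ⟨i.1, hi⟩).1
    have heq : (⟨(⟨i.1, hi⟩ : Fin n).1, by omega⟩ : Fin (2 * n)) = i := Fin.ext rfl
    rw [heq] at this
    omega
end

section
/- For n ≥ 1, the number of involutions of [n] whose plot avoids the pattern 321 (i.e., containing no decreasing subsequence of length 3) equals the central binomial coefficient C(n, ⌊n/2⌋). -/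
/-!
A permutation `τ` is encoded by the word of its steps: `up` at an excedance `i < τ i`,
`down` at a deficiency `τ i < i`, `flat` at a fixed point. For a 321-avoiding involution,
`τ` is increasing on its excedances, so it matches the `k`-th excedance with the `k`-th
deficiency; the word is then a lattice path that stays weakly above height `0` (the
deficiency of a pair comes after its excedance) and is flat only at height `0` (no pair
straddles a fixed point). Conversely, such a path determines the involution matching its
`k`-th `up` with its `k`-th `down`. Counting these paths by their first step gives
`C(n, ⌊(n - h)/2⌋)` paths of length `n` from height `h` down to `0`.
-/

open Finset Function

theorem Nat.succ_choose_succ_div_two {n : ℕ} (hn : 1 ≤ n) :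
    (n + 1).choose ((n + 1) / 2) = n.choose (n / 2) + n.choose ((n - 1) / 2) := by
  obtain ⟨m, rfl | rfl⟩ := n.even_or_odd'
  · obtain ⟨m, rfl⟩ : ∃ k, m = k + 1 := ⟨m - 1, by omega⟩
    rw [show (2 * (m + 1) + 1) / 2 = m + 1 by omega, show 2 * (m + 1) / 2 = m + 1 by omega,
      show (2 * (m + 1) - 1) / 2 = m by omega, Nat.choose_succ_succ', add_comm]
  · rw [show (2 * m + 1 + 1) / 2 = m + 1 by omega, show (2 * m + 1) / 2 = m by omega,
      show (2 * m + 1 - 1) / 2 = m by omega, Nat.choose_succ_succ', Nat.choose_symm_half]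

theorem Finset.lt_card_filter_iff_orderEmbOfFin {α : Type*} [LinearOrder α] {s : Finset α}
    {m : ℕ} (h : s.card = m) {P : α → Prop} [DecidablePred P] (hP : IsLowerSet {x | P x})
    (k : Fin m) : k < #{x ∈ s | P x} ↔ P (s.orderEmbOfFin h k) := by
  set e := s.orderEmbOfFin h
  constructor
  · intro hk
    by_contra hPk
    have hsub : {x ∈ s | P x} ⊆ (Iio k).image e := by
      intro x hx
      rw [mem_filter] at hx
      obtain ⟨j, rfl⟩ : x ∈ Set.range e := by simpa [e] using hx.1
      refine mem_image_of_mem e (mem_Iio.2 (lt_of_not_ge fun hkj => hPk ?_))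
      exact hP (e.monotone hkj) hx.2
    have := (card_le_card hsub).trans card_image_le
    rw [Fin.card_Iio] at this
    omega
  · intro hPk
    have hsub : (Iic k).image e ⊆ {x ∈ s | P x} := by
      intro x hx
      obtain ⟨j, hj, rfl⟩ := mem_image.1 hx
      exact mem_filter.2 ⟨s.orderEmbOfFin_mem h j, hP (e.monotone (mem_Iic.1 hj)) hPk⟩
    have := card_le_card hsub
    rw [card_image_of_injective _ e.injective, Fin.card_Iic] at this
    omega

theorem Finset.eqOn_of_strictMonoOn {α β : Type*} [LinearOrder α] [LinearOrder β]
    {s : Finset α} {t : Finset β} (hst : s.card = t.card) {f g : α → β}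
    (hf : StrictMonoOn f s) (hg : StrictMonoOn g s) (hfst : Set.MapsTo f s t)
    (hgst : Set.MapsTo g s t) : Set.EqOn f g s := by
  have key : ∀ f : α → β, StrictMonoOn f s → Set.MapsTo f s t →
      f ∘ s.orderEmbOfFin rfl = t.orderEmbOfFin hst.symm := fun f hf hft =>
    orderEmbOfFin_unique hst.symm (fun k => hft (s.orderEmbOfFin_mem rfl k))
      fun a b hab => hf (s.orderEmbOfFin_mem rfl a) (s.orderEmbOfFin_mem rfl b)
        ((s.orderEmbOfFin rfl).strictMono hab)
  intro x hx
  obtain ⟨k, rfl⟩ : x ∈ Set.range (s.orderEmbOfFin rfl) := by simpa using hx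
  exact (congrFun (key f hf hfst) k).trans (congrFun (key g hg hgst) k).symm

namespace Involution321

inductive Step
  | up | down | flat
  deriving DecidableEq

open Step

/-- Motzkin paths from height `h` down to `0` whose flat steps all lie at height `0`. -/
def IsPathFrom : ℕ → List Step → Prop
  | h, [] => h = 0
  | h, up :: l => IsPathFrom (h + 1) l
  | 0, down :: _ => False
  | h + 1, down :: l => IsPathFrom h l
  | 0, flat :: l => IsPathFrom 0 l
  | _ + 1, flat :: _ => False

def paths : ℕ → ℕ → Finset (List Step)
  | 0, 0 => {[]}
  | 0, _ + 1 => ∅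
  | n + 1, 0 => (paths n 0).image (flat :: ·) ∪ (paths n 1).image (up :: ·)
  | n + 1, h + 1 => (paths n h).image (down :: ·) ∪ (paths n (h + 2)).image (up :: ·)

theorem mem_paths {n h : ℕ} {l : List Step} :
    l ∈ paths n h ↔ l.length = n ∧ IsPathFrom h l := by
  induction n generalizing h l with
  | zero => cases h <;> cases l <;> simp [paths, IsPathFrom]
  | succ n ih =>
    rcases l with _ | ⟨a, l⟩
    · cases h <;> simp [paths]
    · cases h <;> cases a <;> simp [paths, IsPathFrom, ih]

theorem card_image_cons_union {a b : Step} (hab : a ≠ b) (s t : Finset (List Step)) :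
    #(s.image (a :: ·) ∪ t.image (b :: ·)) = #s + #t := by
  rw [card_union_of_disjoint, card_image_of_injective _ List.cons_injective,
    card_image_of_injective _ List.cons_injective]
  simp [disjoint_left, hab.symm]

theorem card_paths (n h : ℕ) : #(paths n h) = if h ≤ n then n.choose ((n - h) / 2) else 0 := by
  induction n generalizing h with
  | zero => cases h <;> simp [paths]
  | succ n ih =>
    cases h with
    | zero =>
      rw [paths, card_image_cons_union (by decide), ih, ih]
      rcases Nat.eq_zero_or_pos n with rfl | hn
      · simp
      · simp [Nat.succ_choose_succ_div_two hn, show 1 ≤ n from hn]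
    | succ h =>
      rw [paths, card_image_cons_union (by decide), ih, ih]
      by_cases hh : h + 2 ≤ n
      · obtain ⟨j, hj⟩ : ∃ j, (n - h) / 2 = j + 1 := ⟨(n - h) / 2 - 1, by omega⟩
        simp [hh, show h ≤ n by omega, show n + 1 - (h + 1) = n - h by omega, hj,
          show (n - (h + 2)) / 2 = j by omega, Nat.choose_succ_succ', add_comm]
      · by_cases h' : h ≤ n
        · simp [hh, h', show (n - h) / 2 = 0 by omega]
        · simp [hh, h', show ¬ h + 1 ≤ n + 1 by omega]

section LinearOrder

variable {α : Type*} [LinearOrder α]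

def Avoids321 (f : α → α) : Prop := ∀ i j k, i < j → j < k → f k < f j → ¬ f j < f i

def step (f : α → α) (x : α) : Step := if x < f x then up else if f x < x then down else flat

theorem step_eq_up {f : α → α} {x : α} : step f x = up ↔ x < f x := by
  unfold step; split_ifs <;> simp_all

theorem step_eq_down {f : α → α} {x : α} : step f x = down ↔ f x < x := by
  unfold step; split_ifs <;> simp_all [lt_asymm]

theorem step_eq_flat {f : α → α} {x : α} : step f x = flat ↔ f x = x := by
  unfold step; split_ifs <;> simp_all [ne_of_gt, ne_of_lt, le_antisymm_iff]

theorem avoids321_of_strictMonoOn {f : α → α} (hexc : StrictMonoOn f {x | x < f x})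
    (hrest : StrictMonoOn f {x | f x ≤ x}) : Avoids321 f := by
  intro i j k hij hjk hkj hji
  by_cases hj : j < f j
  · by_cases hi : i < f i
    · exact (hexc hi hj hij).not_gt hji
    · exact (lt_trans (lt_of_le_of_lt (not_lt.1 hi) hij) hj).not_gt hji
  · by_cases hk : k < f k
    · exact (lt_trans (lt_of_le_of_lt (not_lt.1 hj) hjk) hk).not_gt hkj
    · exact (hrest (not_lt.1 hj) (not_lt.1 hk) hjk).not_gt hkj

theorem strictMonoOn_of_avoids321 {f : α → α} (hinv : Involutive f) (havoid : Avoids321 f) :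
    StrictMonoOn f {x | x < f x} := by
  intro x hx y hy hxy
  refine lt_of_le_of_ne (not_lt.1 fun hyx => havoid x y (f y) hxy hy ?_ hyx) ?_
  · rwa [hinv y]
  · exact hinv.injective.ne hxy.ne

theorem eq_of_step_eq [Fintype α] {τ σ : α → α} (hτ : Involutive τ) (hτ' : Avoids321 τ)
    (hσ : Involutive σ) (hσ' : Avoids321 σ) (h : step τ = step σ) : τ = σ := by
  have hexc : {x | x < τ x} = {x | x < σ x} := by
    ext x; simp only [Set.mem_ofPred_eq, ← step_eq_up, h]
  have hdef : {x | τ x < x} = {x | σ x < x} := by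
    ext x; simp only [Set.mem_ofPred_eq, ← step_eq_down, h]
  have mapsTo : ∀ f : α → α, Involutive f → Set.MapsTo f {x | x < f x} {x | f x < x} :=
    fun f hf x hx => by simpa [Set.mem_ofPred_eq, hf x] using hx
  have hcard : #{x | x < τ x} = #{x | τ x < x} :=
    card_nbij' τ τ (by simpa using mapsTo τ hτ) (fun x hx => by simpa [hτ x] using hx)
      (fun x _ => hτ x) (fun x _ => hτ x)
  have heq : Set.EqOn τ σ {x | x < τ x} := by
    have := eqOn_of_strictMonoOn hcard (g := σ) (by simpa using strictMonoOn_of_avoids321 hτ hτ')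
      (by simpa [hexc] using strictMonoOn_of_avoids321 hσ hσ') (by simpa using mapsTo τ hτ)
      (by simpa [hexc, hdef] using mapsTo σ hσ)
    simpa using this
  funext x
  rcases lt_trichotomy x (τ x) with hx | hx | hx
  · exact heq hx
  · have hflat : step σ x = flat := by rw [← h, step_eq_flat, ← hx]
    rw [← hx, step_eq_flat.1 hflat]
  · have hσx : σ (τ x) = x := by rw [← heq (show τ x < τ (τ x) by rwa [hτ x]), hτ x]
    exact ((congrArg σ hσx).symm.trans (hσ _)).symm

def matching {E D : Finset α} (φ : E ≃o D) (x : α) : α :=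
  if hx : x ∈ E then φ ⟨x, hx⟩ else if hx : x ∈ D then φ.symm ⟨x, hx⟩ else x

variable {E D : Finset α} (φ : E ≃o D)

theorem matching_of_mem_left {x : α} (hx : x ∈ E) : matching φ x = φ ⟨x, hx⟩ := dif_pos hx

theorem matching_of_mem_right (hED : Disjoint E D) {x : α} (hx : x ∈ D) :
    matching φ x = φ.symm ⟨x, hx⟩ := by
  rw [matching, dif_neg (disjoint_right.1 hED hx), dif_pos hx]

theorem matching_of_notMem {x : α} (hE : x ∉ E) (hD : x ∉ D) : matching φ x = x := by
  rw [matching, dif_neg hE, dif_neg hD]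

theorem involutive_matching (hED : Disjoint E D) : Involutive (matching φ) := by
  intro x
  by_cases hE : x ∈ E
  · rw [matching_of_mem_left φ hE, matching_of_mem_right φ hED (φ _).2]
    simp
  by_cases hD : x ∈ D
  · rw [matching_of_mem_right φ hED hD, matching_of_mem_left φ (φ.symm _).2]
    simp
  rw [matching_of_notMem φ hE hD, matching_of_notMem φ hE hD]

theorem strictMonoOn_matching_left : StrictMonoOn (matching φ) E := by
  intro x hx y hy hxy
  rw [matching_of_mem_left φ hx, matching_of_mem_left φ hy]
  exact φ.strictMono (show (⟨x, hx⟩ : E) < ⟨y, hy⟩ from hxy)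

variable (hED : Disjoint E D) (hlt : ∀ x : E, (x : α) < φ x)
include hED hlt

theorem step_matching (x : α) :
    step (matching φ) x = if x ∈ E then up else if x ∈ D then down else flat := by
  by_cases hE : x ∈ E
  · rw [if_pos hE, step_eq_up, matching_of_mem_left φ hE]
    exact hlt ⟨x, hE⟩
  by_cases hD : x ∈ D
  · rw [if_neg hE, if_pos hD, step_eq_down, matching_of_mem_right φ hED hD]
    simpa using hlt (φ.symm ⟨x, hD⟩)
  rw [if_neg hE, if_neg hD, step_eq_flat, matching_of_notMem φ hE hD]

theorem strictMonoOn_matching_compl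
    (hstraddle : ∀ (x : E) (y : α), y ∉ E → y ∉ D → (x : α) < y → (φ x : α) < y) :
    StrictMonoOn (matching φ) {x | x ∉ E} := by
  intro x hx y hy hxy
  have hdown : ∀ z ∈ D, matching φ z < z := fun z hz => step_eq_down.1 <| by
    rw [step_matching φ hED hlt, if_neg (disjoint_right.1 hED hz), if_pos hz]
  by_cases hxD : x ∈ D <;> by_cases hyD : y ∈ D
  · rw [matching_of_mem_right φ hED hxD, matching_of_mem_right φ hED hyD]
    exact φ.symm.strictMono (show (⟨x, hxD⟩ : D) < ⟨y, hyD⟩ from hxy)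
  · rw [matching_of_notMem φ hy hyD]
    exact (hdown x hxD).trans hxy
  · rw [matching_of_notMem φ hx hxD, matching_of_mem_right φ hED hyD]
    set e := φ.symm ⟨y, hyD⟩
    refine lt_of_not_ge fun hex => ?_
    have hne : (e : α) ≠ x := fun h => hx (h ▸ e.2)
    have := hstraddle e x hx hxD (lt_of_le_of_ne hex hne)
    simp only [e, OrderIso.apply_symm_apply] at this
    exact this.not_gt hxy
  · rwa [matching_of_notMem φ hx hxD, matching_of_notMem φ hy hyD]

theorem avoids321_matching
    (hstraddle : ∀ (x : E) (y : α), y ∉ E → y ∉ D → (x : α) < y → (φ x : α) < y) :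
    Avoids321 (matching φ) := by
  have hexc : {x | x < matching φ x} = E := by
    ext x
    rw [Set.mem_ofPred_eq, ← step_eq_up, step_matching φ hED hlt]
    split_ifs <;> simp_all
  have hrest : {x | matching φ x ≤ x} = {x | x ∉ E} := by
    ext x
    rw [Set.mem_ofPred_eq, ← not_lt, ← step_eq_up, step_matching φ hED hlt]
    split_ifs <;> simp_all
  apply avoids321_of_strictMonoOn
  · rw [hexc]
    exact strictMonoOn_matching_left φ
  · rw [hrest]
    exact strictMonoOn_matching_compl φ hED hlt hstraddle

end LinearOrder

variable {n : ℕ}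

def countBefore (w : Fin n → Step) (a : Step) (p : ℕ) : ℕ := #{i | w i = a ∧ (i : ℕ) < p}

@[simp] theorem countBefore_zero (w : Fin n → Step) (a : Step) : countBefore w a 0 = 0 := by
  simp [countBefore]

theorem countBefore_succ (w : Fin (n + 1) → Step) (a : Step) (p : ℕ) :
    countBefore w a (p + 1) = countBefore (fun i => w i.succ) a p + if w 0 = a then 1 else 0 := by
  simp only [countBefore, card_filter, Fin.sum_univ_succ, Fin.val_zero, Fin.val_succ]
  rw [add_comm]
  congr 1 <;> simp

theorem isPathFrom_ofFn_iff (w : Fin n → Step) (h : ℕ) :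
    IsPathFrom h (List.ofFn w) ↔
      (∀ p, countBefore w down p ≤ countBefore w up p + h) ∧
      countBefore w down n = countBefore w up n + h ∧
      ∀ i, w i = flat → countBefore w down i = countBefore w up i + h := by
  induction n generalizing h with
  | zero => simp [countBefore, IsPathFrom, eq_comm]
  | succ n ih =>
    rw [List.ofFn_succ, ← Nat.and_forall_add_one, Fin.forall_fin_succ]
    simp only [countBefore_succ, countBefore_zero, Fin.val_zero, Fin.val_succ]
    cases hw : w 0
    · simp [IsPathFrom, ih, ← add_assoc, add_right_comm _ 1]
    · cases h
      · simp only [IsPathFrom, false_iff, not_and]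
        exact fun hp => absurd (hp.2 0) (by simp)
      · simp [IsPathFrom, ih, ← add_assoc]
    · cases h <;> simp [IsPathFrom, ih]

theorem lt_countBefore_iff (w : Fin n → Step) (a : Step) {m : ℕ} (h : #{i | w i = a} = m)
    (k : Fin m) (p : ℕ) :
    k < countBefore w a p ↔ (({i | w i = a} : Finset (Fin n)).orderEmbOfFin h k : ℕ) < p := by
  rw [countBefore, ← filter_filter]
  exact lt_card_filter_iff_orderEmbOfFin h (P := fun i : Fin n => (i : ℕ) < p)
    (fun a b (hba : (b : ℕ) ≤ a) (ha : (a : ℕ) < p) => hba.trans_lt ha) k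

theorem countBefore_le_of_injective {w : Fin n → Step} {a b : Step} {p : ℕ}
    {f : Fin n → Fin n} (hf : Injective f)
    (h : ∀ i, w i = a → (i : ℕ) < p → w (f i) = b ∧ (f i : ℕ) < p) :
    countBefore w a p ≤ countBefore w b p :=
  card_le_card_of_injOn f (fun i hi => by simpa using h i (by simp_all) (by simp_all))
    hf.injOn

theorem isPathFrom_step {τ : Fin n → Fin n} (hinv : Involutive τ) (havoid : Avoids321 τ) :
    IsPathFrom 0 (List.ofFn (step τ)) := by
  have hup : ∀ i, step τ i = down → step τ (τ i) = up := fun i hi => by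
    rwa [step_eq_up, hinv i, ← step_eq_down]
  have hdown : ∀ i, step τ i = up → step τ (τ i) = down := fun i hi => by
    rwa [step_eq_down, hinv i, ← step_eq_up]
  have hprefix : ∀ p, countBefore (step τ) down p ≤ countBefore (step τ) up p := fun p =>
    countBefore_le_of_injective hinv.injective fun i hi hip =>
      ⟨hup i hi, lt_trans (Fin.lt_def.1 (step_eq_down.1 hi)) hip⟩
  rw [isPathFrom_ofFn_iff]
  refine ⟨hprefix, le_antisymm (hprefix n) (countBefore_le_of_injective hinv.injective
    fun i hi _ => ⟨hdown i hi, (τ i).isLt⟩), fun i hi => le_antisymm (hprefix i) ?_⟩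
  -- An excedance `j < i` with `i < τ j` would give the pattern `τ j, i, j` at `j, i, τ j`.
  refine countBefore_le_of_injective hinv.injective fun j hj hji => ⟨hdown j hj, ?_⟩
  have hji' : j < i := Fin.lt_def.2 hji
  have hτi : τ i = i := step_eq_flat.1 hi
  refine lt_of_not_ge fun hle => ?_
  have hne : i ≠ τ j := fun h => hji'.ne <| by rw [← hinv j, ← h, hτi]
  have hlt : i < τ j := lt_of_le_of_ne (Fin.le_def.2 hle) hne
  exact havoid j i (τ j) hji' hlt (by rw [hinv j, hτi]; exact hji') (by rw [hτi]; exact hlt)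

def pairing (w : Fin n → Step) (hcard : #{i | w i = down} = #{i | w i = up}) :
    ({i | w i = up} : Finset (Fin n)) ≃o ({i | w i = down} : Finset (Fin n)) :=
  (orderIsoOfFin _ rfl).symm.trans (orderIsoOfFin _ hcard)

section Pairing

variable {w : Fin n → Step} (hcard : #{i | w i = down} = #{i | w i = up})

theorem pairing_orderIsoOfFin (k : Fin #{i | w i = up}) :
    (pairing w hcard (orderIsoOfFin _ rfl k) : Fin n) = orderEmbOfFin _ hcard k := by
  simp [pairing]

theorem lt_pairing (hprefix : ∀ p, countBefore w down p ≤ countBefore w up p)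
    (x : ({i | w i = up} : Finset (Fin n))) : (x : Fin n) < pairing w hcard x := by
  obtain ⟨k, rfl⟩ := (orderIsoOfFin _ rfl).surjective x
  rw [pairing_orderIsoOfFin, coe_orderIsoOfFin_apply]
  have hk := (lt_countBefore_iff w down hcard k _).2 (Nat.lt_succ_self _)
  have hle := (lt_countBefore_iff w up rfl k _).1 (hk.trans_le (hprefix _))
  refine lt_of_le_of_ne (Fin.le_def.2 (Nat.lt_succ_iff.1 hle)) fun h => ?_
  have hup := (mem_filter.1 (orderEmbOfFin_mem _ rfl k)).2
  have hdown := (mem_filter.1 (orderEmbOfFin_mem _ hcard k)).2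
  simp [h, hdown] at hup

theorem pairing_lt_of_lt (hflat : ∀ i, w i = flat → countBefore w down i = countBefore w up i)
    (x : ({i | w i = up} : Finset (Fin n))) {y : Fin n} (hy : w y = flat) (hxy : (x : Fin n) < y) :
    (pairing w hcard x : Fin n) < y := by
  obtain ⟨k, rfl⟩ := (orderIsoOfFin _ rfl).surjective x
  rw [pairing_orderIsoOfFin, Fin.lt_def, ← lt_countBefore_iff w down hcard, hflat y hy,
    lt_countBefore_iff w up rfl]
  exact hxy

end Pairing

theorem exists_of_isPathFrom (w : Fin n → Step) (hw : IsPathFrom 0 (List.ofFn w)) :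
    ∃ τ : Fin n → Fin n, Involutive τ ∧ Avoids321 τ ∧ step τ = w := by
  obtain ⟨hprefix, htotal, hflat⟩ := (isPathFrom_ofFn_iff w 0).1 hw
  simp only [add_zero] at hprefix htotal hflat
  have hcard : #{i | w i = down} = #{i | w i = up} := by simpa [countBefore] using htotal
  have hED : Disjoint ({i | w i = up} : Finset (Fin n)) ({i | w i = down} : Finset (Fin n)) :=
    disjoint_filter.2 fun i _ hup hdown => by simp_all
  have hlt := lt_pairing hcard hprefix
  refine ⟨matching (pairing w hcard), involutive_matching _ hED,
    avoids321_matching _ hED hlt fun x y hyE hyD => pairing_lt_of_lt hcard hflat x ?_, ?_⟩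
  · cases h : w y <;> simp_all
  · funext i
    rw [step_matching _ hED hlt]
    cases h : w i <;> simp [h]

def toPath (n : ℕ) :
    {τ : Equiv.Perm (Fin n) // Involutive τ ∧ Avoids321 τ} → paths n 0 := fun τ =>
  ⟨List.ofFn (step τ.1), mem_paths.2 ⟨List.length_ofFn, isPathFrom_step τ.2.1 τ.2.2⟩⟩

theorem toPath_bijective (n : ℕ) : Bijective (toPath n) := by
  constructor
  · rintro ⟨τ, hτ⟩ ⟨σ, hσ⟩ h
    have := List.ofFn_injective (congrArg Subtype.val h)
    exact Subtype.ext (DFunLike.coe_injective (eq_of_step_eq hτ.1 hτ.2 hσ.1 hσ.2 this))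
  · rintro ⟨l, hl⟩
    obtain ⟨rfl, hpath⟩ := mem_paths.1 hl
    obtain ⟨τ, hinv, havoid, hstep⟩ :=
      exists_of_isPathFrom (fun i : Fin l.length => l[(i : ℕ)]) (by rwa [List.ofFn_getElem])
    exact ⟨⟨hinv.toPerm τ, hinv, havoid⟩, Subtype.ext (by simp [toPath, hstep])⟩

end Involution321

theorem involutions_avoiding_321_card_general (n : ℕ) :
    Nat.card {τ : Equiv.Perm (Fin n) // Function.Involutive ⇑τ ∧
      ∀ i j k : Fin n, i < j → j < k → τ k < τ j → ¬ τ j < τ i} =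
    Nat.choose n (n / 2) := by
  refine (Nat.card_congr (Equiv.ofBijective _ (Involution321.toPath_bijective n))).trans ?_
  rw [Nat.card_eq_finsetCard, Involution321.card_paths]
  simp

/-- For `n ≥ 1`, the number of involutions of `[n]` avoiding the classical
pattern 321 (no decreasing subsequence of length 3) is the central binomial
coefficient `C(n, ⌊n/2⌋)`. -/
theorem involutions_avoiding_321_card (n : ℕ) (hn : 1 ≤ n) :
    Nat.card {τ : Equiv.Perm (Fin n) // Function.Involutive ⇑τ ∧
      ∀ i j k : Fin n, i < j → j < k → τ k < τ j → ¬ τ j < τ i} =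
    Nat.choose n (n / 2) :=
  involutions_avoiding_321_card_general n
end

section
/- If an involution κ of [n] classically contains an involution pattern of the form τ = σ ⊖ σ⁻¹ (σ ∈ S_k), then κ contains an occurrence of τ whose index set I is invariant under κ (κ(I) = I), and in which entries paired in τ are paired in κ. -/
/-- The skew sum `σ ⊖ σ⁻¹` of `σ ∈ S_k` with its inverse, as a function on
`Fin (2k)` (0-indexed): positions `i < k` map to `k + σ i`, positions `i ≥ k`
map to `σ⁻¹ (i - k)`. -/
def skewInvol (k : ℕ) (σ : Equiv.Perm (Fin k)) : Fin (2 * k) → Fin (2 * k) := fun i =>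
  if h : (i : ℕ) < k then
    ⟨k + ((σ ⟨(i : ℕ), h⟩ : Fin k) : ℕ), by have := (σ ⟨(i : ℕ), h⟩).2; omega⟩
  else
    ⟨((σ.symm ⟨(i : ℕ) - k, by have := i.2; omega⟩ : Fin k) : ℕ),
      by have := (σ.symm ⟨(i : ℕ) - k, by have := i.2; omega⟩).2; omega⟩

def eLow (k : ℕ) (i : Fin k) : Fin (2 * k) := ⟨(i : ℕ), by have := i.2; omega⟩

def eHigh (k : ℕ) (j : Fin k) : Fin (2 * k) := ⟨k + (j : ℕ), by have := j.2; omega⟩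

lemma skew_eLow (k : ℕ) (σ : Equiv.Perm (Fin k)) (i : Fin k) :
    skewInvol k σ (eLow k i) = eHigh k (σ i) := by
  have h : ((eLow k i : Fin (2 * k)) : ℕ) < k := i.2
  simp only [skewInvol, dif_pos h]
  have h2 : (⟨((eLow k i : Fin (2 * k)) : ℕ), h⟩ : Fin k) = i := rfl
  exact Fin.ext (congrArg (fun x => k + ((σ x : Fin k) : ℕ)) h2)

lemma skew_eHigh (k : ℕ) (σ : Equiv.Perm (Fin k)) (j : Fin k) :
    skewInvol k σ (eHigh k j) = eLow k (σ.symm j) := by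
  have h : ¬ ((eHigh k j : Fin (2 * k)) : ℕ) < k := by
    simp only [eHigh]; omega
  simp only [skewInvol, dif_neg h]
  apply Fin.ext
  simp only [eLow]
  congr 2
  apply Fin.ext
  simp only [eHigh]
  omega

lemma eOfCases (k : ℕ) (a : Fin (2 * k)) :
    (∃ i : Fin k, a = eLow k i) ∨ (∃ j : Fin k, a = eHigh k j) := by
  by_cases h : (a : ℕ) < k
  · exact Or.inl ⟨⟨a, h⟩, Fin.ext rfl⟩
  · exact Or.inr ⟨⟨(a : ℕ) - k, by have := a.2; omega⟩, Fin.ext (by simp [eHigh]; omega)⟩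

lemma skew_skew (k : ℕ) (σ : Equiv.Perm (Fin k)) (a : Fin (2 * k)) :
    skewInvol k σ (skewInvol k σ a) = a := by
  rcases eOfCases k a with ⟨i, rfl⟩ | ⟨j, rfl⟩
  · rw [skew_eLow, skew_eHigh, Equiv.symm_apply_apply]
  · rw [skew_eHigh, skew_eLow, Equiv.apply_symm_apply]

/-- If an involution `κ` of `[n]` classically contains the involution pattern
`τ = σ ⊖ σ⁻¹`, then it contains an occurrence of `τ` whose index set is invariant
under `κ` and in which entries paired in `τ` are paired in `κ`. -/
theorem contains_skew_invol_implies_Icontains (n k : ℕ) (κ : Equiv.Perm (Fin n))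
    (hκ : Function.Involutive ⇑κ) (σ : Equiv.Perm (Fin k))
    (h : ∃ f : Fin (2 * k) → Fin n, StrictMono f ∧
      ∀ a b : Fin (2 * k), κ (f a) < κ (f b) ↔ skewInvol k σ a < skewInvol k σ b) :
    ∃ f : Fin (2 * k) → Fin n, StrictMono f ∧
      (∀ a b : Fin (2 * k), κ (f a) < κ (f b) ↔ skewInvol k σ a < skewInvol k σ b) ∧
      ∀ a : Fin (2 * k), κ (f a) = f (skewInvol k σ a) := by
  obtain ⟨f, hf, hpat⟩ := h
  rcases Nat.eq_zero_or_pos k with hk | hk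
  · subst hk
    exact ⟨f, hf, hpat, fun a => absurd a.2 (by omega)⟩
  -- it suffices to find a strictly monotone g with κ ∘ g = g ∘ skewInvol
  have build : ∀ g : Fin (2 * k) → Fin n, StrictMono g →
      (∀ a, κ (g a) = g (skewInvol k σ a)) →
      ∃ f : Fin (2 * k) → Fin n, StrictMono f ∧
      (∀ a b : Fin (2 * k), κ (f a) < κ (f b) ↔ skewInvol k σ a < skewInvol k σ b) ∧
      ∀ a : Fin (2 * k), κ (f a) = f (skewInvol k σ a) := by
    intro g hg hsym
    refine ⟨g, hg, fun a b => ?_, hsym⟩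
    rw [hsym a, hsym b, hg.lt_iff_lt]
  by_cases hA : ∀ i : Fin k, f (eLow k ⟨k - 1, by omega⟩) < κ (f (eLow k i))
  · -- use the first half and its κ-image
    set g : Fin (2 * k) → Fin n := fun a =>
      if h : (a : ℕ) < k then f a else κ (f (skewInvol k σ a)) with hgdef
    have glow : ∀ i : Fin k, g (eLow k i) = f (eLow k i) := fun i => dif_pos i.2
    have ghigh : ∀ j : Fin k, g (eHigh k j) = κ (f (eLow k (σ.symm j))) := by
      intro j
      have hcond : ¬ ((eHigh k j : Fin (2 * k)) : ℕ) < k := by simp [eHigh]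
      rw [hgdef]
      simp only [dif_neg hcond]
      rw [skew_eHigh]
    have hsym : ∀ a, κ (g a) = g (skewInvol k σ a) := by
      intro a
      rcases eOfCases k a with ⟨i, rfl⟩ | ⟨j, rfl⟩
      · rw [glow, skew_eLow, ghigh, Equiv.symm_apply_apply]
      · rw [ghigh, skew_eHigh, glow, hκ]
    have hg : StrictMono g := by
      intro a b hab
      rcases eOfCases k a with ⟨i, rfl⟩ | ⟨j, rfl⟩
      · rcases eOfCases k b with ⟨i', rfl⟩ | ⟨j', rfl⟩
        · rw [glow, glow]; exact hf hab
        · rw [glow, ghigh]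
          exact lt_of_le_of_lt
            (hf.monotone (show eLow k i ≤ eLow k ⟨k - 1, by omega⟩ by
              simp only [eLow, Fin.mk_le_mk]; have := i.2; omega))
            (hA (σ.symm j'))
      · rcases eOfCases k b with ⟨i', rfl⟩ | ⟨j', rfl⟩
        · exact absurd hab (by
            simp only [eHigh, eLow, Fin.mk_lt_mk]
            have := i'.2; omega)
        · rw [ghigh, ghigh]
          have := (hpat (eLow k (σ.symm j)) (eLow k (σ.symm j'))).mpr
          rw [skew_eLow, skew_eLow, Equiv.apply_symm_apply, Equiv.apply_symm_apply] at this
          exact this hab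
    exact build g hg hsym
  by_cases hB : ∀ j : Fin k, κ (f (eHigh k j)) < f (eHigh k ⟨0, hk⟩)
  · -- use the κ-image of the second half and the second half
    set g : Fin (2 * k) → Fin n := fun a =>
      if h : (a : ℕ) < k then κ (f (skewInvol k σ a)) else f a with hgdef
    have glow : ∀ i : Fin k, g (eLow k i) = κ (f (eHigh k (σ i))) := by
      intro i
      have hcond : ((eLow k i : Fin (2 * k)) : ℕ) < k := i.2
      rw [hgdef]
      simp only [dif_pos hcond]
      rw [skew_eLow]
    have ghigh : ∀ j : Fin k, g (eHigh k j) = f (eHigh k j) := by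
      intro j
      have hcond : ¬ ((eHigh k j : Fin (2 * k)) : ℕ) < k := by simp [eHigh]
      rw [hgdef]
      simp only [dif_neg hcond]
    have hsym : ∀ a, κ (g a) = g (skewInvol k σ a) := by
      intro a
      rcases eOfCases k a with ⟨i, rfl⟩ | ⟨j, rfl⟩
      · rw [glow, skew_eLow, ghigh, hκ]
      · rw [ghigh, skew_eHigh, glow, Equiv.apply_symm_apply]
    have hg : StrictMono g := by
      intro a b hab
      rcases eOfCases k a with ⟨i, rfl⟩ | ⟨j, rfl⟩
      · rcases eOfCases k b with ⟨i', rfl⟩ | ⟨j', rfl⟩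
        · rw [glow, glow]
          have := (hpat (eHigh k (σ i)) (eHigh k (σ i'))).mpr
          rw [skew_eHigh, skew_eHigh, Equiv.symm_apply_apply, Equiv.symm_apply_apply] at this
          exact this hab
        · rw [glow, ghigh]
          exact lt_of_lt_of_le (hB (σ i))
            (hf.monotone (show eHigh k ⟨0, hk⟩ ≤ eHigh k j' by
              simp only [eHigh, Fin.mk_le_mk]; omega))
      · rcases eOfCases k b with ⟨i', rfl⟩ | ⟨j', rfl⟩
        · exact absurd hab (by
            simp only [eHigh, eLow, Fin.mk_lt_mk]
            have := i'.2; omega)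
        · rw [ghigh, ghigh]; exact hf hab
    exact build g hg hsym
  · -- both cases failing is contradictory
    exfalso
    push_neg at hA hB
    obtain ⟨i, hi⟩ := hA
    obtain ⟨j, hj⟩ := hB
    have h1 : κ (f (eHigh k j)) < κ (f (eLow k i)) := by
      apply (hpat _ _).mpr
      rw [skew_eHigh, skew_eLow]
      simp only [eLow, eHigh, Fin.mk_lt_mk]
      have := (σ.symm j).2; omega
    have h2 : f (eLow k ⟨k - 1, by omega⟩) < f (eHigh k ⟨0, hk⟩) := by
      apply hf
      simp only [eLow, eHigh, Fin.mk_lt_mk]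
      omega
    exact absurd (lt_of_le_of_lt hj (lt_of_lt_of_le h1 (le_of_lt (lt_of_le_of_lt hi h2))))
      (lt_irrefl _)
end

section
/- Let Π be a set of permutations each of size at most n, and let τ be an involution that classically contains some π ∈ Π. Then there exists an involution θ of size at most 2·|π| such that θ contains π, and θ can be obtained from τ by deleting a union of cycles of τ (i.e., there is a subset K ⊆ [m] with τ(K) = K such that θ is the standardization of τ restricted to K). -/
/-- If an involution `τ` of `[m]` classically contains a pattern `π ∈ S_k`, then there
is a subset `K ⊆ [m]` closed under `τ` with `|K| ≤ 2k` such that the standardized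
restriction of `τ` to `K` (an involution of size at most `2k`) still contains `π`:
there is an occurrence of `π` in `τ` using only positions in `K`. -/
theorem basis_doubling (m k : ℕ) (τ : Equiv.Perm (Fin m)) (hτ : Function.Involutive ⇑τ)
    (π : Equiv.Perm (Fin k))
    (h : ∃ f : Fin k → Fin m, StrictMono f ∧ ∀ a b : Fin k, τ (f a) < τ (f b) ↔ π a < π b) :
    ∃ K : Finset (Fin m), (∀ i ∈ K, τ i ∈ K) ∧ K.card ≤ 2 * k ∧
      ∃ g : Fin k → Fin m, StrictMono g ∧ (∀ a, g a ∈ K) ∧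
        ∀ a b : Fin k, τ (g a) < τ (g b) ↔ π a < π b := by
  obtain ⟨f, hf, hocc⟩ := h
  refine ⟨Finset.image f Finset.univ ∪ Finset.image (fun a => τ (f a)) Finset.univ,
    ?_, ?_, f, hf, ?_, hocc⟩
  · intro i hi
    rcases Finset.mem_union.mp hi with hi | hi
    · obtain ⟨a, -, rfl⟩ := Finset.mem_image.mp hi
      exact Finset.mem_union_right _ (Finset.mem_image.mpr ⟨a, Finset.mem_univ _, rfl⟩)
    · obtain ⟨a, -, rfl⟩ := Finset.mem_image.mp hi
      rw [hτ]
      exact Finset.mem_union_left _ (Finset.mem_image.mpr ⟨a, Finset.mem_univ _, rfl⟩)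
  · calc _ ≤ (Finset.image f Finset.univ).card +
        (Finset.image (fun a => τ (f a)) Finset.univ).card := Finset.card_union_le _ _
      _ ≤ k + k := by
        refine Nat.add_le_add ?_ ?_ <;>
          exact le_trans (Finset.card_image_le) (by simp)
      _ = 2 * k := (two_mul k).symm
  · intro a
    exact Finset.mem_union_left _ (Finset.mem_image.mpr ⟨a, Finset.mem_univ _, rfl⟩)
end

section
/- For n ≥ 1, the number of involutions of [n] that I-avoid the pattern 132 equals the sum over k from 0 to ⌊n/2⌋ of C(n−k, k)·k!. -/
/-!
The two conditions say precisely that the left endpoints of the 2-cycles form an initial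
segment `{0, …, k-1}`: they form a lower set, and conversely an involution with this property
sends each of them to a point `≥ k`, which gives both conditions. Such an involution is
determined by the injection `i ↦ τ i - k` of `Fin k` into `Fin (n - k)`, and every injection
arises by swapping `i` with `k + f i`. Hence there are `(n - k).descFactorial k =
C(n - k, k) * k!` of them with `k` 2-cycles, and `2 * k ≤ n`.
-/

open Finset Function Equiv

section PairSwap

variable {ι α : Type*} {l r : ι ↪ α}

open Classical in
noncomputable def pairSwap (l r : ι ↪ α) (x : α) : α :=
  if h : ∃ i, l i = x then r h.choose else if h : ∃ i, r i = x then l h.choose else x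

theorem pairSwap_left (l r : ι ↪ α) (i : ι) : pairSwap l r (l i) = r i := by
  have h : ∃ j, l j = l i := ⟨i, rfl⟩
  rw [pairSwap, dif_pos h, l.injective h.choose_spec]

theorem pairSwap_right (hlr : ∀ i j, l i ≠ r j) (i : ι) : pairSwap l r (r i) = l i := by
  have h : ∃ j, r j = r i := ⟨i, rfl⟩
  rw [pairSwap, dif_neg fun ⟨j, hj⟩ => hlr j i hj, dif_pos h, r.injective h.choose_spec]

theorem pairSwap_cases (hlr : ∀ i j, l i ≠ r j) (x : α) :
    (∃ i, x = l i ∧ pairSwap l r x = r i) ∨ (∃ i, x = r i ∧ pairSwap l r x = l i) ∨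
      ((∀ i, l i ≠ x) ∧ (∀ i, r i ≠ x) ∧ pairSwap l r x = x) := by
  by_cases hl : ∃ i, l i = x
  · obtain ⟨i, rfl⟩ := hl
    exact .inl ⟨i, rfl, pairSwap_left l r i⟩
  by_cases hr : ∃ i, r i = x
  · obtain ⟨i, rfl⟩ := hr
    exact .inr <| .inl ⟨i, rfl, pairSwap_right hlr i⟩
  refine .inr <| .inr ⟨not_exists.1 hl, not_exists.1 hr, ?_⟩
  rw [pairSwap, dif_neg hl, dif_neg hr]

theorem pairSwap_involutive (hlr : ∀ i j, l i ≠ r j) : Involutive (pairSwap l r) := by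
  intro x
  rcases pairSwap_cases hlr x with ⟨i, rfl, hx⟩ | ⟨i, rfl, hx⟩ | ⟨-, -, hx⟩
  · rw [hx, pairSwap_right hlr]
  · rw [hx, pairSwap_left]
  · rw [hx, hx]

theorem eq_pairSwap (hlr : ∀ i j, l i ≠ r j) {τ : α → α} (hτ : Involutive τ)
    (hl : ∀ i, τ (l i) = r i) (hfix : ∀ x, (∀ i, l i ≠ x) → (∀ i, r i ≠ x) → τ x = x) :
    τ = pairSwap l r := by
  funext x
  rcases pairSwap_cases hlr x with ⟨i, rfl, hx⟩ | ⟨i, rfl, hx⟩ | ⟨hxl, hxr, hx⟩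
  · rw [hx, hl]
  · rw [hx, ← hl, hτ]
  · rw [hx, hfix x hxl hxr]

end PairSwap

section LinearOrder

variable {α : Type*} [LinearOrder α]

def IAvoids132 (τ : α → α) : Prop :=
  Involutive τ ∧ (∀ a c : α, a < τ a → c < τ c → ¬ τ a < c) ∧
    (∀ f a : α, τ f = f → a < τ a → a < f)

theorem IAvoids132.lt_apply_of_le {τ : α → α} (hτ : IAvoids132 τ) {a b : α} (hba : b ≤ a)
    (ha : a < τ a) : b < τ b := by
  obtain ⟨hinv, hcross, hfix⟩ := hτ
  rcases lt_trichotomy b (τ b) with hb | hb | hb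
  · exact hb
  · exact absurd (hfix b a hb.symm ha) hba.not_gt
  · have hτb : τ b < τ (τ b) := by rwa [hinv]
    have := hcross (τ b) a hτb ha
    rw [hinv] at this
    obtain rfl := le_antisymm hba (not_lt.1 this)
    exact absurd ha hb.not_gt

end LinearOrder

section Fin

variable {n k : ℕ} {τ : Fin n → Fin n}

theorem le_val_apply_of_val_lt (hinv : Involutive τ) (hτ : ∀ a, a < τ a ↔ (a : ℕ) < k)
    {a : Fin n} (ha : (a : ℕ) < k) : k ≤ τ a := by
  by_contra! h
  have := (hτ (τ a)).2 h
  rw [hinv] at this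
  exact this.not_gt ((hτ a).2 ha)

def numLeftEnds (τ : Fin n → Fin n) : ℕ := #{a | a < τ a}

theorem IAvoids132.lt_apply_iff (hτ : IAvoids132 τ) (a : Fin n) :
    a < τ a ↔ (a : ℕ) < numLeftEnds τ :=
  (Fin.lt_card_filter_univ_iff_apply_of_imp _ fun _ _ => hτ.lt_apply_of_le).symm

theorem iAvoids132_of_lt_apply_iff (hinv : Involutive τ) (hτ : ∀ a, a < τ a ↔ (a : ℕ) < k) :
    IAvoids132 τ := by
  refine ⟨hinv, fun a c ha hc => ?_, fun f a hf ha => ?_⟩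
  · have := le_val_apply_of_val_lt hinv hτ ((hτ a).1 ha)
    have := (hτ c).1 hc
    rw [Fin.lt_def]; omega
  · have : ¬ (f : ℕ) < k := by rw [← hτ, hf]; exact lt_irrefl f
    have := (hτ a).1 ha
    rw [Fin.lt_def]; omega

theorem numLeftEnds_eq (hkn : k ≤ n) (hτ : ∀ a, a < τ a ↔ (a : ℕ) < k) :
    numLeftEnds τ = k := by
  simp only [numLeftEnds, hτ, Fin.card_filter_val_lt, min_eq_right hkn]

theorem iAvoids132_and_numLeftEnds_eq_iff (hkn : k ≤ n) :
    IAvoids132 τ ∧ numLeftEnds τ = k ↔ Involutive τ ∧ ∀ a, a < τ a ↔ (a : ℕ) < k := by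
  constructor
  · rintro ⟨hτ, rfl⟩
    exact ⟨hτ.1, IAvoids132.lt_apply_iff hτ⟩
  · rintro ⟨hinv, hτ⟩
    exact ⟨iAvoids132_of_lt_apply_iff hinv hτ, numLeftEnds_eq hkn hτ⟩

variable (hkn : k ≤ n)

def rightEnds (f : Fin k ↪ Fin (n - k)) : Fin k ↪ Fin n :=
  f.trans ((Fin.natAddEmb k).trans (Fin.castLEEmb (by omega)))

@[simp]
theorem val_rightEnds (f : Fin k ↪ Fin (n - k)) (i : Fin k) :
    (rightEnds hkn f i : ℕ) = k + f i := by
  simp [rightEnds]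

theorem castLE_ne_rightEnds (f : Fin k ↪ Fin (n - k)) (i j : Fin k) :
    Fin.castLEEmb hkn i ≠ rightEnds hkn f j := by
  rw [Ne, Fin.ext_iff, val_rightEnds, Fin.castLEEmb_apply, Fin.val_castLE]
  omega

noncomputable def ofEmbedding (f : Fin k ↪ Fin (n - k)) : Perm (Fin n) :=
  (pairSwap_involutive (castLE_ne_rightEnds hkn f)).toPerm _

theorem lt_ofEmbedding_iff (f : Fin k ↪ Fin (n - k)) (a : Fin n) :
    a < ofEmbedding hkn f a ↔ (a : ℕ) < k := by
  simp only [ofEmbedding, Involutive.coe_toPerm]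
  rcases pairSwap_cases (castLE_ne_rightEnds hkn f) a with
    ⟨i, rfl, ha⟩ | ⟨i, rfl, ha⟩ | ⟨hl, -, ha⟩
  · rw [ha]
    simp only [Fin.castLEEmb_apply, Fin.lt_def, Fin.val_castLE, val_rightEnds, Fin.is_lt, iff_true]
    omega
  · rw [ha]
    simp only [Fin.castLEEmb_apply, Fin.lt_def, val_rightEnds, Fin.val_castLE]
    omega
  · rw [ha, lt_self_iff_false, false_iff]
    exact fun hak => hl ⟨a, hak⟩ rfl

theorem apply_eq_self_of_forall_ne (hinv : Involutive τ) (hτ : ∀ a, a < τ a ↔ (a : ℕ) < k)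
    {x : Fin n} (hx : ¬ (x : ℕ) < k) (hr : ∀ i : Fin k, τ (Fin.castLE hkn i) ≠ x) : τ x = x := by
  by_contra hne
  have hτx : τ x < τ (τ x) := by
    rw [hinv x]
    exact lt_of_le_of_ne (not_lt.1 ((hτ x).not.2 hx)) hne
  rw [hτ] at hτx
  exact hr ⟨τ x, hτx⟩ (hinv x)

variable (hinv : Involutive τ) (hτ : ∀ a, a < τ a ↔ (a : ℕ) < k)

def toEmbedding : Fin k ↪ Fin (n - k) where
  toFun i := ⟨τ (Fin.castLE hkn i) - k, by
    have := le_val_apply_of_val_lt hinv hτ (a := Fin.castLE hkn i) i.isLt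
    omega⟩
  inj' i j hij := by
    have hi := le_val_apply_of_val_lt hinv hτ (a := Fin.castLE hkn i) i.isLt
    have hj := le_val_apply_of_val_lt hinv hτ (a := Fin.castLE hkn j) j.isLt
    simp only [Fin.mk.injEq] at hij
    exact Fin.castLE_injective hkn (hinv.injective (Fin.ext (by omega)))

theorem val_toEmbedding (i : Fin k) :
    (toEmbedding hkn hinv hτ i : ℕ) = τ (Fin.castLE hkn i) - k :=
  rfl

theorem rightEnds_toEmbedding (i : Fin k) :
    rightEnds hkn (toEmbedding hkn hinv hτ) i = τ (Fin.castLEEmb hkn i) := by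
  have := le_val_apply_of_val_lt hinv hτ (a := Fin.castLE hkn i) i.isLt
  ext
  rw [val_rightEnds, val_toEmbedding, Fin.castLEEmb_apply]
  omega

noncomputable def leftEndsEquivEmbedding :
    {τ : Perm (Fin n) // Involutive τ ∧ ∀ a, a < τ a ↔ (a : ℕ) < k} ≃ (Fin k ↪ Fin (n - k)) where
  toFun τ := toEmbedding hkn τ.2.1 τ.2.2
  invFun f :=
    ⟨ofEmbedding hkn f, pairSwap_involutive (castLE_ne_rightEnds hkn f), lt_ofEmbedding_iff hkn f⟩
  left_inv τ := by
    obtain ⟨τ, hinv, hτ⟩ := τ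
    refine Subtype.ext (Equiv.coe_fn_injective ?_)
    refine (eq_pairSwap (castLE_ne_rightEnds hkn _) hinv
      (fun i => (rightEnds_toEmbedding hkn hinv hτ i).symm) fun x hl hr => ?_).symm
    refine apply_eq_self_of_forall_ne hkn hinv hτ (fun hx => hl ⟨x, hx⟩ rfl) fun i hi => ?_
    exact hr i (by rw [rightEnds_toEmbedding, Fin.castLEEmb_apply, hi])
  right_inv f := by
    ext i
    simp only [val_toEmbedding, ofEmbedding, Involutive.coe_toPerm]
    rw [← Fin.castLEEmb_apply, pairSwap_left, val_rightEnds]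
    omega

end Fin

theorem card_iAvoids132_numLeftEnds_eq {n k : ℕ} (hkn : k ≤ n) :
    Nat.card {τ : Perm (Fin n) // IAvoids132 τ ∧ numLeftEnds τ = k} =
      (n - k).descFactorial k := by
  rw [Nat.card_congr ((subtypeEquivRight fun τ => iAvoids132_and_numLeftEnds_eq_iff hkn).trans
    (leftEndsEquivEmbedding hkn)), Nat.card_eq_fintype_card, Fintype.card_embedding_eq,
    Fintype.card_fin, Fintype.card_fin]

theorem IAvoids132.two_mul_numLeftEnds_le {n : ℕ} {τ : Fin n → Fin n} (hτ : IAvoids132 τ) :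
    2 * numLeftEnds τ ≤ n := by
  have hle : numLeftEnds τ ≤ n := (card_le_univ _).trans_eq (Fintype.card_fin n)
  have := Fintype.card_le_of_embedding (toEmbedding hle hτ.1 (IAvoids132.lt_apply_iff hτ))
  rw [Fintype.card_fin, Fintype.card_fin] at this
  omega

theorem involutions_Iavoiding_132_card_general (n : ℕ) :
    Nat.card {τ : Equiv.Perm (Fin n) // Function.Involutive ⇑τ ∧
      (∀ a c : Fin n, a < τ a → c < τ c → ¬ τ a < c) ∧
      (∀ f a : Fin n, τ f = f → a < τ a → a < f)} =
    ∑ k ∈ Finset.range (n / 2 + 1), Nat.choose (n - k) k * Nat.factorial k := by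
  classical
  change Nat.card {τ : Perm (Fin n) // IAvoids132 τ} = _
  have hmaps : ∀ τ ∈ ({τ | IAvoids132 τ} : Finset (Perm (Fin n))),
      numLeftEnds τ ∈ range (n / 2 + 1) := fun τ hτ =>
    mem_range.2 (by have := (mem_filter.1 hτ).2.two_mul_numLeftEnds_le; omega)
  rw [Nat.card_eq_fintype_card, Fintype.card_subtype, card_eq_sum_card_fiberwise hmaps]
  refine sum_congr rfl fun k hk => ?_
  rw [filter_filter, ← Fintype.card_subtype, ← Nat.card_eq_fintype_card,
    card_iAvoids132_numLeftEnds_eq (by rw [mem_range] at hk; omega),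
    Nat.descFactorial_eq_factorial_mul_choose, mul_comm]

/-- For `n ≥ 1`, the number of involutions of `[n]` that I-avoid 132 — equivalently
(as characterized in the paper) those whose 2-cycles form a permutational matching
(no two independent 2-cycles) and all of whose fixed points are greater than every
left endpoint of a 2-cycle — equals `Σ_{k=0}^{⌊n/2⌋} C(n−k,k)·k!`. -/
theorem involutions_Iavoiding_132_card (n : ℕ) (hn : 1 ≤ n) :
    Nat.card {τ : Equiv.Perm (Fin n) // Function.Involutive ⇑τ ∧
      (∀ a c : Fin n, a < τ a → c < τ c → ¬ τ a < c) ∧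
      (∀ f a : Fin n, τ f = f → a < τ a → a < f)} =
    ∑ k ∈ Finset.range (n / 2 + 1), Nat.choose (n - k) k * Nat.factorial k :=
  involutions_Iavoiding_132_card_general n
end

section
/- For n ≥ 1, the number of involutions of [n] that I-avoid 123 equals the sum over k from 1 to n of ⌊k/2⌋! · ⌊(n−k)/2⌋! · C(n − ⌊k/2⌋ − 1, n − k). -/
open Finset Function Equiv
open scoped Nat

/-!
Read an involution `τ` through its cycles `[min x (τ x), max x (τ x)]` and let `b` be the smallest
right endpoint of a cycle. Every cycle ends at or after `b`, so of three pairwise independent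
cycles the last two start after `b`, while the cycle ending at `b` can always serve as the first:
`τ` has three pairwise independent cycles iff it has two independent cycles inside the
`τ`-invariant set `S` of points `x` with `b < x` and `b < τ x`.

The complement of `S` is `[0, b]` together with its image under `τ`: each point `x < b` opens a
cycle closing at or after `b`, and `b` either closes such a cycle or is fixed. Hence
`k = n - #S = 2b + [τ b = b]`, so `b = ⌊k/2⌋` and the parity of `k` tells whether `b` is fixed.
For given `k`, `S` is any `(n - k)`-subset of `(⌊k/2⌋, n)` and `τ` matches the points below `⌊k/2⌋`
bijectively with the rest of the complement of `S`. Inside `S` the cycles pairwise overlap iff all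
left endpoints precede all right endpoints, i.e. iff `τ` maps the lower half of `S` onto its upper
half and fixes the middle point, if any. This gives
`C(n - ⌊k/2⌋ - 1, n - k) · ⌊k/2⌋! · ⌊(n - k)/2⌋!` involutions for each `k`.
-/

namespace IAvoid123

section Exchange

variable {α : Type*} [DecidableEq α]

theorem _root_.Function.Involutive.apply_mem_of_card_le {τ : α → α} (hτ : Involutive τ)
    {X Y : Finset α} (hXY : ∀ x ∈ X, τ x ∈ Y) (hc : #Y ≤ #X) {y : α} (hy : y ∈ Y) :
    τ y ∈ X := by
  have himage : X.image τ = Y := eq_of_subset_of_card_le (image_subset_iff.2 hXY)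
    (by rwa [card_image_of_injective _ hτ.injective])
  obtain ⟨x, hx, rfl⟩ := mem_image.1 (himage ▸ hy)
  rwa [hτ x]

noncomputable def restrictEquiv {X Y : Finset α} {τ : α → α} (hτ : Injective τ)
    (hXY : ∀ x ∈ X, τ x ∈ Y) (hc : #X = #Y) : X ≃ Y :=
  Equiv.ofBijective (fun x => ⟨τ x, hXY x x.2⟩) <|
    (Fintype.bijective_iff_injective_and_card _).2
      ⟨fun x y h => Subtype.ext (hτ (congrArg Subtype.val h)), by simpa using hc⟩

def exchangeAlong {X Y : Finset α} (e : X ≃ Y) (f : α → α) (x : α) : α :=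
  if hx : x ∈ X then e ⟨x, hx⟩ else if hy : x ∈ Y then e.symm ⟨x, hy⟩ else f x

section exchangeAlong

variable {X Y : Finset α} (e : X ≃ Y) (f : α → α)

theorem exchangeAlong_of_mem_left {x : α} (hx : x ∈ X) : exchangeAlong e f x = e ⟨x, hx⟩ :=
  dif_pos hx

theorem exchangeAlong_of_mem_right (hXY : Disjoint X Y) {y : α} (hy : y ∈ Y) :
    exchangeAlong e f y = e.symm ⟨y, hy⟩ :=
  (dif_neg (disjoint_right.1 hXY hy)).trans (dif_pos hy)

theorem exchangeAlong_of_notMem {x : α} (hx : x ∉ X ∪ Y) : exchangeAlong e f x = f x := by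
  rw [mem_union, not_or] at hx
  exact (dif_neg hx.1).trans (dif_neg hx.2)

theorem involutive_exchangeAlong (hXY : Disjoint X Y) (hf : Involutive f)
    (hfix : ∀ x ∈ X ∪ Y, f x = x) : Involutive (exchangeAlong e f) := by
  intro x
  by_cases hX : x ∈ X
  · rw [exchangeAlong_of_mem_left e f hX, exchangeAlong_of_mem_right e f hXY (e _).2]
    simp
  by_cases hY : x ∈ Y
  · rw [exchangeAlong_of_mem_right e f hXY hY, exchangeAlong_of_mem_left e f (e.symm _).2]
    simp
  have hx : x ∉ X ∪ Y := by simp [hX, hY]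
  have hfx : f x ∉ X ∪ Y := fun h => hx (by rwa [← hf x, hfix _ h])
  rw [exchangeAlong_of_notMem e f hx, exchangeAlong_of_notMem e f hfx, hf x]

theorem exchangeAlong_eq_apply {τ : α → α} (hτ : Involutive τ) (hXY : Disjoint X Y)
    (he : ∀ x : X, (e x : α) = τ x) {x : α} (hx : x ∈ X ∪ Y) : exchangeAlong e f x = τ x := by
  rcases mem_union.1 hx with hX | hY
  · rw [exchangeAlong_of_mem_left e f hX, he]
  · have h : x = τ (e.symm ⟨x, hY⟩) := by rw [← he, apply_symm_apply]
    rw [exchangeAlong_of_mem_right e f hXY hY]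
    conv_rhs => rw [h, hτ]

end exchangeAlong

def IsExchange (X₁ Y₁ X₂ Y₂ : Finset α) (τ : α → α) : Prop :=
  Involutive τ ∧ (∀ x ∈ X₁, τ x ∈ Y₁) ∧ (∀ x ∈ X₂, τ x ∈ Y₂) ∧
    ∀ x, x ∉ X₁ ∪ Y₁ ∪ X₂ ∪ Y₂ → τ x = x

variable {X₁ Y₁ X₂ Y₂ : Finset α} {e₁ : X₁ ≃ Y₁} {e₂ : X₂ ≃ Y₂}

theorem exchangeAlong_exchangeAlong_of_mem (h : Disjoint (X₁ ∪ Y₁) (X₂ ∪ Y₂)) {x : α}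
    (hx : x ∈ X₂) : exchangeAlong e₁ (exchangeAlong e₂ id) x = e₂ ⟨x, hx⟩ :=
  (exchangeAlong_of_notMem _ _ (disjoint_right.1 h (mem_union_left _ hx))).trans
    (exchangeAlong_of_mem_left _ _ hx)

theorem isExchange_exchangeAlong (h₁ : Disjoint X₁ Y₁) (h₂ : Disjoint X₂ Y₂)
    (h : Disjoint (X₁ ∪ Y₁) (X₂ ∪ Y₂)) :
    IsExchange X₁ Y₁ X₂ Y₂ (exchangeAlong e₁ (exchangeAlong e₂ id)) := by
  refine ⟨involutive_exchangeAlong _ _ h₁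
      (involutive_exchangeAlong _ _ h₂ (fun _ => rfl) fun _ _ => rfl)
      fun x hx => exchangeAlong_of_notMem _ _ (disjoint_left.1 h hx),
    fun x hx => by simp [exchangeAlong_of_mem_left _ _ hx],
    fun x hx => by simp [exchangeAlong_exchangeAlong_of_mem h hx], fun x hx => ?_⟩
  simp only [mem_union, not_or] at hx
  rw [exchangeAlong_of_notMem _ _ (by simp [hx]), exchangeAlong_of_notMem _ _ (by simp [hx]), id]

theorem exchangeAlong_exchangeAlong_eq {τ : α → α} (h₁ : Disjoint X₁ Y₁)
    (h₂ : Disjoint X₂ Y₂) (hτ : IsExchange X₁ Y₁ X₂ Y₂ τ) (he₁ : ∀ x : X₁, (e₁ x : α) = τ x)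
    (he₂ : ∀ x : X₂, (e₂ x : α) = τ x) : exchangeAlong e₁ (exchangeAlong e₂ id) = τ := by
  ext x
  by_cases hx₁ : x ∈ X₁ ∪ Y₁
  · exact exchangeAlong_eq_apply _ _ hτ.1 h₁ he₁ hx₁
  rw [exchangeAlong_of_notMem _ _ hx₁]
  by_cases hx₂ : x ∈ X₂ ∪ Y₂
  · exact exchangeAlong_eq_apply _ _ hτ.1 h₂ he₂ hx₂
  rw [exchangeAlong_of_notMem _ _ hx₂, id, hτ.2.2.2 x (by simp_all)]

theorem card_isExchange (h₁ : Disjoint X₁ Y₁) (h₂ : Disjoint X₂ Y₂)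
    (h : Disjoint (X₁ ∪ Y₁) (X₂ ∪ Y₂)) (c₁ : #X₁ = #Y₁) (c₂ : #X₂ = #Y₂) :
    Nat.card {τ : Perm α // IsExchange X₁ Y₁ X₂ Y₂ τ} = (#X₁)! * (#X₂)! := by
  let Φ (e : (X₁ ≃ Y₁) × (X₂ ≃ Y₂)) : {τ : Perm α // IsExchange X₁ Y₁ X₂ Y₂ τ} :=
    ⟨(isExchange_exchangeAlong h₁ h₂ h (e₁ := e.1) (e₂ := e.2)).1.toPerm,
      isExchange_exchangeAlong h₁ h₂ h⟩
  have hΦ : Bijective Φ := by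
    refine ⟨fun e e' he => ?_, fun ⟨τ, hτ⟩ => ?_⟩
    · have he (x : α) := congrArg (fun τ => τ.1 x) he
      ext x
      · simpa [Φ, exchangeAlong_of_mem_left _ _ x.2] using he x
      · simpa [Φ, exchangeAlong_exchangeAlong_of_mem h x.2] using he x
    · refine ⟨⟨restrictEquiv hτ.1.injective hτ.2.1 c₁, restrictEquiv hτ.1.injective hτ.2.2.1 c₂⟩,
        Subtype.ext (Equiv.ext fun x => ?_)⟩
      exact congrFun (exchangeAlong_exchangeAlong_eq h₁ h₂ hτ (fun _ => rfl) fun _ => rfl) x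
  rw [← Nat.card_congr (Equiv.ofBijective Φ hΦ), Nat.card_prod, Nat.card_eq_fintype_card,
    Nat.card_eq_fintype_card, Fintype.card_equiv (Fintype.equivOfCardEq (by simpa using c₁)),
    Fintype.card_equiv (Fintype.equivOfCardEq (by simpa using c₂)), Fintype.card_coe,
    Fintype.card_coe]

end Exchange

section Halves

variable {α : Type*} [LinearOrder α] (S : Finset α)

def rankIn (x : α) : ℕ := #{y ∈ S | y < x}

def lowerHalf : Finset α := {x ∈ S | rankIn S x < #S / 2}

def upperHalf : Finset α := {x ∈ S | #S - #S / 2 ≤ rankIn S x}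

variable {S}

theorem rankIn_lt_rankIn {x y : α} (hx : x ∈ S) (hxy : x < y) : rankIn S x < rankIn S y :=
  card_lt_card <| (ssubset_iff_of_subset fun y hy => by
    simp only [mem_filter] at hy ⊢
    exact ⟨hy.1, hy.2.trans hxy⟩).2 ⟨x, by simp [hx, hxy]⟩

theorem card_filter_rankIn_lt (m : ℕ) : #{x ∈ S | rankIn S x < m} = min m #S := by
  induction S using Finset.induction_on_max with
  | empty => simp
  | insert a s has ih =>
    have hrank : ∀ x ∈ s, rankIn (insert a s) x = rankIn s x := fun x hx => by
      simp only [rankIn, filter_insert, (has x hx).not_gt, if_false]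
    have hranka : rankIn (insert a s) a = #s := by
      simp only [rankIn, filter_insert, lt_irrefl, if_false]
      exact congrArg card (filter_true_of_mem has)
    have has' : a ∉ s := fun h => lt_irrefl a (has a h)
    rw [filter_insert, hranka, filter_congr fun x hx => by rw [hrank x hx],
      card_insert_of_notMem has']
    split_ifs with h
    · rw [card_insert_of_notMem (fun h' => has' (mem_filter.1 h').1), ih]; omega
    · omega

theorem card_lowerHalf : #(lowerHalf S) = #S / 2 := by
  rw [lowerHalf, card_filter_rankIn_lt]; omega

theorem card_upperHalf : #(upperHalf S) = #S / 2 := by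
  have := card_filter_add_card_filter_not (s := S) (p := fun x => rankIn S x < #S - #S / 2)
  simp only [not_lt, card_filter_rankIn_lt] at this
  rw [upperHalf]; omega

theorem disjoint_lowerHalf_upperHalf : Disjoint (lowerHalf S) (upperHalf S) :=
  disjoint_filter.2 fun _ _ h₁ h₂ => by omega

end Halves

section Overlap

variable {α : Type*} [LinearOrder α] {τ : α → α} {S : Finset α}

/-- No two cycles of `τ` through `S` are independent. -/
def PairwiseOverlap (τ : α → α) (S : Finset α) : Prop :=
  ∀ y ∈ S, ∀ z ∈ S, min z (τ z) ≤ max y (τ y)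

def ExchangesHalves (τ : α → α) (S : Finset α) : Prop :=
  (∀ x ∈ lowerHalf S, τ x ∈ upperHalf S) ∧
    ∀ x ∈ S, x ∉ lowerHalf S → x ∉ upperHalf S → τ x = x

theorem card_filter_apply_lt_eq (hτ : Involutive τ) (hS : ∀ x ∈ S, τ x ∈ S) :
    #{x ∈ S | τ x < x} = #{x ∈ S | x < τ x} := by
  rw [← card_image_of_injective {x ∈ S | x < τ x} hτ.injective]
  congr 1
  ext y
  simp only [mem_image, mem_filter]
  refine ⟨fun hy => ⟨τ y, ⟨hS y hy.1, by rw [hτ]; exact hy.2⟩, hτ y⟩, ?_⟩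
  rintro ⟨x, hx, rfl⟩
  exact ⟨hS x hx.1, by rw [hτ]; exact hx.2⟩

theorem PairwiseOverlap.le {x y : α} (h : PairwiseOverlap τ S) (hx : x ∈ S) (hxτ : x ≤ τ x)
    (hy : y ∈ S) (hyτ : τ y ≤ y) : x ≤ y := by
  simpa [min_eq_left hxτ, max_eq_left hyτ] using h y hy x hx

theorem PairwiseOverlap.lt {x y : α} (h : PairwiseOverlap τ S) (hx : x ∈ S) (hxτ : x ≤ τ x)
    (hy : y ∈ S) (hyτ : τ y ≤ y) (hstrict : x < τ x ∨ τ y < y) : x < y := by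
  refine lt_of_le_of_ne (h.le hx hxτ hy hyτ) ?_
  rintro rfl
  exact hstrict.elim (fun h' => (not_le.2 h') hyτ) (fun h' => (not_le.2 h') hxτ)

theorem PairwiseOverlap.card_filter_lt_apply (hτ : Involutive τ) (hS : ∀ x ∈ S, τ x ∈ S)
    (h : PairwiseOverlap τ S) : #{x ∈ S | x < τ x} = #S / 2 := by
  have hcard := card_filter_apply_lt_eq hτ hS
  set P := {x ∈ S | x < τ x}
  set Q := {x ∈ S | τ x < x}
  have hPQ : Disjoint P Q := disjoint_filter.2 fun _ _ h₁ h₂ => lt_asymm h₁ h₂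
  have hsub : P ∪ Q ⊆ S := union_subset (filter_subset _ _) (filter_subset _ _)
  have hfixed : #(S \ (P ∪ Q)) ≤ 1 := by
    have hfix : ∀ x ∈ S \ (P ∪ Q), x ∈ S ∧ τ x = x := fun x hx => by
      simp only [P, Q, mem_sdiff, mem_union, mem_filter, not_or, not_and, not_lt] at hx
      exact ⟨hx.1, le_antisymm (hx.2.1 hx.1) (hx.2.2 hx.1)⟩
    refine card_le_one.2 fun a ha b hb => ?_
    obtain ⟨ha, ha'⟩ := hfix a ha
    obtain ⟨hb, hb'⟩ := hfix b hb
    exact le_antisymm (h.le ha ha'.ge hb hb'.le) (h.le hb hb'.ge ha ha'.le)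
  have := card_sdiff_add_card_eq_card hsub
  have := card_le_card hsub
  rw [card_union_of_disjoint hPQ] at *
  omega

theorem PairwiseOverlap.mem_lowerHalf_iff (hτ : Involutive τ) (hS : ∀ x ∈ S, τ x ∈ S)
    (h : PairwiseOverlap τ S) {x : α} (hx : x ∈ S) : x ∈ lowerHalf S ↔ x < τ x := by
  rw [lowerHalf, mem_filter, ← h.card_filter_lt_apply hτ hS, rankIn]
  refine ⟨fun hxl => lt_of_not_ge fun hxτ => hxl.2.not_ge (card_le_card fun y hy => ?_),
    fun hxτ => ⟨hx, card_lt_card ((ssubset_iff_of_subset fun y hy => ?_).2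
      ⟨x, by simp [hx, hxτ]⟩)⟩⟩
  · simp only [mem_filter] at hy ⊢
    exact ⟨hy.1, h.lt hy.1 hy.2.le hx hxτ (.inl hy.2)⟩
  · simp only [mem_filter] at hy ⊢
    exact ⟨hy.1, lt_of_not_ge fun hyτ => (h.lt hx hxτ.le hy.1 hyτ (.inl hxτ)).not_gt hy.2⟩

theorem PairwiseOverlap.mem_upperHalf (hτ : Involutive τ) (hS : ∀ x ∈ S, τ x ∈ S)
    (h : PairwiseOverlap τ S) {x : α} (hx : x ∈ S) (hxτ : τ x < x) : x ∈ upperHalf S := by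
  have hsub : {y ∈ S | ¬ τ y < y} ⊆ {y ∈ S | y < x} := fun y hy => by
    simp only [mem_filter, not_lt] at hy ⊢
    exact ⟨hy.1, h.lt hy.1 hy.2 hx hxτ.le (.inr hxτ)⟩
  have := card_le_card hsub
  have := card_filter_add_card_filter_not (s := S) (p := fun y => τ y < y)
  have := card_filter_apply_lt_eq hτ hS
  have := h.card_filter_lt_apply hτ hS
  exact mem_filter.2 ⟨hx, by unfold rankIn; omega⟩

theorem PairwiseOverlap.exchangesHalves (hτ : Involutive τ) (hS : ∀ x ∈ S, τ x ∈ S)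
    (h : PairwiseOverlap τ S) : ExchangesHalves τ S := by
  refine ⟨fun x hx => ?_, fun x hx hxl hxu => ?_⟩
  · have hxS := (mem_filter.1 hx).1
    have hxτ := (h.mem_lowerHalf_iff hτ hS hxS).1 hx
    exact h.mem_upperHalf hτ hS (hS x hxS) (by rwa [hτ])
  · exact le_antisymm (not_lt.1 (mt (h.mem_lowerHalf_iff hτ hS hx).2 hxl))
      (not_lt.1 fun h' => hxu (h.mem_upperHalf hτ hS hx h'))

theorem ExchangesHalves.apply_mem_lowerHalf (hτ : Involutive τ) (h : ExchangesHalves τ S)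
    {x : α} (hx : x ∈ upperHalf S) : τ x ∈ lowerHalf S :=
  hτ.apply_mem_of_card_le h.1 (by rw [card_lowerHalf, card_upperHalf]) hx

theorem ExchangesHalves.mapsTo (hτ : Involutive τ) (h : ExchangesHalves τ S) :
    ∀ x ∈ S, τ x ∈ S := by
  intro x hx
  by_cases hl : x ∈ lowerHalf S
  · exact (mem_filter.1 (h.1 x hl)).1
  by_cases hu : x ∈ upperHalf S
  · exact (mem_filter.1 (h.apply_mem_lowerHalf hτ hu)).1
  rwa [h.2 x hx hl hu]

theorem ExchangesHalves.pairwiseOverlap (hτ : Involutive τ) (h : ExchangesHalves τ S) :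
    PairwiseOverlap τ S := by
  have hleft {w} (hw : w ∈ S) : ∃ u ∈ S, rankIn S u < #S - #S / 2 ∧ min w (τ w) ≤ u := by
    by_cases hu : w ∈ upperHalf S
    · have := mem_filter.1 (h.apply_mem_lowerHalf hτ hu)
      exact ⟨τ w, this.1, by omega, min_le_right _ _⟩
    · have : ¬ #S - #S / 2 ≤ rankIn S w := fun h' => hu (mem_filter.2 ⟨hw, h'⟩)
      exact ⟨w, hw, by omega, min_le_left _ _⟩
  have hright {w} (hw : w ∈ S) : ∃ v ∈ S, #S / 2 ≤ rankIn S v ∧ v ≤ max w (τ w) := by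
    by_cases hl : w ∈ lowerHalf S
    · have := mem_filter.1 (h.1 w hl)
      exact ⟨τ w, this.1, by omega, le_max_right _ _⟩
    · exact ⟨w, hw, by simpa [lowerHalf, hw] using hl, le_max_left _ _⟩
  intro y hy z hz
  obtain ⟨u, hu, hru, hzu⟩ := hleft hz
  obtain ⟨v, hv, hrv, hvy⟩ := hright hy
  refine hzu.trans (le_trans (not_lt.1 fun hvu => ?_) hvy)
  have := rankIn_lt_rankIn hv hvu
  omega

end Overlap

section FirstEnd

variable {α : Type*} [LinearOrder α] {τ : α → α}

theorem _root_.Function.Involutive.apply_min_self (hτ : Involutive τ) (x : α) :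
    τ (min x (τ x)) = max x (τ x) := by
  rcases le_total x (τ x) with h | h <;> simp [h, hτ x]

theorem _root_.Function.Involutive.apply_max_self (hτ : Involutive τ) (x : α) :
    τ (max x (τ x)) = min x (τ x) := by
  rcases le_total x (τ x) with h | h <;> simp [h, hτ x]

variable [Fintype α] [Nonempty α]

def firstEnd (τ : α → α) : α := univ.inf' univ_nonempty fun x => max x (τ x)

def rightPart (τ : α → α) : Finset α := {x | firstEnd τ < x ∧ firstEnd τ < τ x}

theorem firstEnd_le_max (x : α) : firstEnd τ ≤ max x (τ x) := inf'_le _ (mem_univ x)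

theorem exists_max_eq_firstEnd (τ : α → α) : ∃ x, max x (τ x) = firstEnd τ := by
  obtain ⟨x, -, hx⟩ := exists_mem_eq_inf' univ_nonempty fun x => max x (τ x)
  exact ⟨x, hx.symm⟩

theorem apply_firstEnd_le (hτ : Involutive τ) : τ (firstEnd τ) ≤ firstEnd τ := by
  obtain ⟨x, hx⟩ := exists_max_eq_firstEnd τ
  rw [← hx, hτ.apply_max_self]
  exact min_le_max

theorem firstEnd_le_apply {x : α} (hx : x < firstEnd τ) : firstEnd τ ≤ τ x :=
  (le_max_iff.1 (firstEnd_le_max x)).resolve_left hx.not_ge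

theorem mem_rightPart_iff {x : α} : x ∈ rightPart τ ↔ firstEnd τ < min x (τ x) := by
  simp [rightPart]

theorem firstEnd_notMem_rightPart : firstEnd τ ∉ rightPart τ :=
  fun h => lt_irrefl _ (mem_filter.1 h).2.1

theorem apply_mem_rightPart (hτ : Involutive τ) {x : α} (hx : x ∈ rightPart τ) :
    τ x ∈ rightPart τ := by
  simp only [rightPart, mem_filter, mem_univ, true_and, hτ x] at hx ⊢
  exact hx.symm

theorem exists_pattern_iff (hτ : Involutive τ) :
    (∃ a b c : α, a ≤ τ a ∧ b ≤ τ b ∧ c ≤ τ c ∧ τ a < b ∧ τ b < c) ↔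
      ¬ PairwiseOverlap τ (rightPart τ) := by
  constructor
  · rintro ⟨a, b, c, ha, hb, hc, hab, hbc⟩ hov
    have hfb : firstEnd τ < b := (max_eq_right ha ▸ firstEnd_le_max a).trans_lt hab
    have hb' : b ∈ rightPart τ := mem_rightPart_iff.2 (by rw [min_eq_left hb]; exact hfb)
    have hc' : c ∈ rightPart τ :=
      mem_rightPart_iff.2 (by rw [min_eq_left hc]; exact hfb.trans (hb.trans_lt hbc))
    have := hov b hb' c hc'
    rw [min_eq_left hc, max_eq_right hb] at this
    exact this.not_gt hbc
  · intro h
    simp only [PairwiseOverlap, not_forall, not_le, exists_prop] at h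
    obtain ⟨y, hy, z, hz, hyz⟩ := h
    obtain ⟨x, hx⟩ := exists_max_eq_firstEnd τ
    refine ⟨min x (τ x), min y (τ y), min z (τ z), ?_, ?_, ?_, ?_, ?_⟩
    all_goals simp only [hτ.apply_min_self]
    · exact min_le_max
    · exact min_le_max
    · exact min_le_max
    · exact hx ▸ mem_rightPart_iff.1 hy
    · exact hyz

end FirstEnd

section FinCounts

variable {n : ℕ}

theorem card_rightPart_lt [NeZero n] (τ : Fin n → Fin n) : #(rightPart τ) < n :=
  (card_lt_univ_of_notMem firstEnd_notMem_rightPart).trans_eq (Fintype.card_fin n)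

theorem card_rightPart [NeZero n] {τ : Fin n → Fin n} (hτ : Involutive τ) :
    n - #(rightPart τ) = 2 * firstEnd τ + if τ (firstEnd τ) = firstEnd τ then 1 else 0 := by
  set b := firstEnd τ
  have hcompl : (rightPart τ)ᶜ = Iic b ∪ (Iic b).image τ := by
    ext x
    simp only [rightPart, mem_compl, mem_filter, mem_univ, true_and, not_and_or, not_lt,
      mem_union, mem_Iic, mem_image]
    refine or_congr_right ⟨fun h => ⟨τ x, h, hτ x⟩, ?_⟩
    rintro ⟨y, hy, rfl⟩
    rwa [hτ]
  have hinter : Iic b ∩ (Iic b).image τ = {b, τ b} := by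
    ext x
    simp only [mem_inter, mem_Iic, mem_image, mem_insert, mem_singleton]
    constructor
    · rintro ⟨hx, y, hy, rfl⟩
      rcases hy.lt_or_eq with hy | rfl
      · exact .inl (le_antisymm hx (firstEnd_le_apply hy))
      · exact .inr rfl
    · rintro (rfl | rfl)
      · exact ⟨le_rfl, τ b, apply_firstEnd_le hτ, hτ b⟩
      · exact ⟨apply_firstEnd_le hτ, b, le_rfl, rfl⟩
  have h := card_union_add_card_inter (Iic b) ((Iic b).image τ)
  rw [← hcompl, hinter, card_compl, card_image_of_injective _ hτ.injective, Fin.card_Iic,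
    Fintype.card_fin] at h
  have := card_rightPart_lt τ
  split_ifs with hfix
  · rw [hfix, pair_eq_singleton, card_singleton] at h; omega
  · rw [card_pair (Ne.symm hfix)] at h; omega

def rightRange (n k : ℕ) : Finset (Fin n) := {x | k / 2 < (x : ℕ)}

def leftOpeners (n k : ℕ) : Finset (Fin n) := {x | (x : ℕ) < k / 2}

/-- `(k - 1) / 2` is `k / 2 - 1` for even `k` and `k / 2` for odd `k`: the point `k / 2` closes a
cycle exactly when `k` is even, and is a fixed point otherwise. -/
def leftClosers (k : ℕ) (S : Finset (Fin n)) : Finset (Fin n) :=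
  {x | (k - 1) / 2 < (x : ℕ) ∧ x ∉ S}

theorem card_filter_lt_val (m : ℕ) : #{x : Fin n | m < (x : ℕ)} = n - m - 1 := by
  have h := card_filter_add_card_filter_not (s := univ) (p := fun x : Fin n => (x : ℕ) < m + 1)
  simp only [Fin.card_filter_val_lt, not_lt, Nat.add_one_le_iff, card_fin] at h
  omega

theorem card_rightRange (k : ℕ) : #(rightRange n k) = n - k / 2 - 1 :=
  card_filter_lt_val _

theorem card_leftOpeners {k : ℕ} (hkn : k ≤ n) : #(leftOpeners n k) = k / 2 := by
  rw [leftOpeners, Fin.card_filter_val_lt]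
  omega

theorem card_leftClosers {k : ℕ} {S : Finset (Fin n)} (hk : 1 ≤ k) (hkn : k ≤ n)
    (hS : S ∈ powersetCard (n - k) (rightRange n k)) : #(leftClosers k S) = k / 2 := by
  obtain ⟨hsub, hcard⟩ := mem_powersetCard.1 hS
  have hsub' : S ⊆ ({x : Fin n | (k - 1) / 2 < (x : ℕ)} : Finset (Fin n)) := fun x hx => by
    have := mem_filter.1 (hsub hx)
    simp only [mem_filter, mem_univ, true_and] at this ⊢
    omega
  have : leftClosers k S = ({x : Fin n | (k - 1) / 2 < (x : ℕ)} : Finset (Fin n)) \ S := by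
    ext x
    simp [leftClosers]
  rw [this, card_sdiff_of_subset hsub', card_filter_lt_val, hcard]
  omega

theorem IsExchange.exchangesHalves {k : ℕ} {S : Finset (Fin n)} {τ : Fin n → Fin n}
    (hS : S ∈ powersetCard (n - k) (rightRange n k))
    (h : IsExchange (leftOpeners n k) (leftClosers k S) (lowerHalf S) (upperHalf S) τ) :
    ExchangesHalves τ S := by
  refine ⟨h.2.2.1, fun x hx hxl hxu => h.2.2.2 x ?_⟩
  have := mem_filter.1 (mem_powersetCard.1 hS |>.1 hx)
  simp [leftOpeners, leftClosers, hx, hxl, hxu, this.2.le]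

end FinCounts

section Decomposition

variable {n k : ℕ} [NeZero n] {τ : Fin n → Fin n} {S : Finset (Fin n)}

theorem val_firstEnd (hτ : Involutive τ) (hk : n - #(rightPart τ) = k) :
    ((firstEnd τ : Fin n) : ℕ) = k / 2 := by
  have h := card_rightPart hτ
  split_ifs at h <;> omega

theorem apply_firstEnd_eq_iff (hτ : Involutive τ) (hk : n - #(rightPart τ) = k) :
    τ (firstEnd τ) = firstEnd τ ↔ k % 2 = 1 := by
  have h := card_rightPart hτ
  split_ifs at h with hfix <;> simp only [hfix, true_iff, false_iff] <;> omega

theorem rightPart_mem_powersetCard (hτ : Involutive τ) (hk : n - #(rightPart τ) = k) :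
    rightPart τ ∈ powersetCard (n - k) (rightRange n k) := by
  have hb := val_firstEnd hτ hk
  have := card_rightPart_lt τ
  refine mem_powersetCard.2 ⟨fun x hx => ?_, by omega⟩
  have := (mem_filter.1 hx).2.1
  simp only [rightRange, mem_filter, mem_univ, true_and]
  rw [Fin.lt_def] at this
  omega

theorem isExchange_of_pairwiseOverlap (hτ : Involutive τ)
    (hov : PairwiseOverlap τ (rightPart τ)) (hk : n - #(rightPart τ) = k) :
    IsExchange (leftOpeners n k) (leftClosers k (rightPart τ)) (lowerHalf (rightPart τ))
      (upperHalf (rightPart τ)) τ := by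
  have hb := val_firstEnd hτ hk
  have hfix := apply_firstEnd_eq_iff hτ hk
  have hhalves := hov.exchangesHalves hτ fun _ => apply_mem_rightPart hτ
  refine ⟨hτ, fun x hx => ?_, hhalves.1, fun x hx => ?_⟩
  · have hxb : x < firstEnd τ := by
      rw [Fin.lt_def, hb]; exact (mem_filter.1 hx).2
    have hτx : τ x ∉ rightPart τ := fun h =>
      (mem_filter.1 h).2.2.not_gt (by rwa [hτ])
    simp only [leftClosers, mem_filter, mem_univ, true_and, hτx, not_false_eq_true, and_true]
    rcases (firstEnd_le_apply hxb).lt_or_eq with h | h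
    · rw [Fin.lt_def] at h; omega
    · have : τ (firstEnd τ) ≠ firstEnd τ := by rw [h, hτ, ← h]; exact hxb.ne
      rw [← h]
      have := mt hfix.2 this
      omega
  · simp only [mem_union, not_or, leftOpeners, leftClosers, mem_filter, mem_univ, true_and,
      not_lt, not_and, not_not] at hx
    obtain ⟨⟨⟨hxo, hxc⟩, hxl⟩, hxu⟩ := hx
    by_cases hxS : x ∈ rightPart τ
    · exact hhalves.2 x hxS hxl hxu
    have hxc := hxc.mt hxS
    have := card_rightPart_lt τ
    rw [show x = firstEnd τ from Fin.ext (by omega)]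
    exact hfix.2 (by omega)

theorem rightPart_eq_of_isExchange (hk : 1 ≤ k) (hkn : k ≤ n)
    (hS : S ∈ powersetCard (n - k) (rightRange n k))
    (h : IsExchange (leftOpeners n k) (leftClosers k S) (lowerHalf S) (upperHalf S) τ) :
    rightPart τ = S := by
  have hSτ := (h.exchangesHalves hS).mapsTo h.1
  obtain ⟨hτ, hopen, -, hfix⟩ := h
  have hSgt : ∀ x ∈ S, k / 2 < (x : ℕ) := fun x hx =>
    (mem_filter.1 (mem_powersetCard.1 hS |>.1 hx)).2
  have hclose : ∀ y ∈ leftClosers k S, τ y ∈ leftOpeners n k := fun y hy =>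
    hτ.apply_mem_of_card_le hopen (by rw [card_leftOpeners hkn, card_leftClosers hk hkn hS]) hy
  set j : Fin n := ⟨k / 2, by omega⟩
  have hb : firstEnd τ = j := by
    refine le_antisymm ((firstEnd_le_max j).trans (max_le le_rfl ?_)) ?_
    · by_cases hjc : j ∈ leftClosers k S
      · exact Fin.le_def.2 (mem_filter.1 (hclose j hjc)).2.le
      · have hjS : j ∉ S := fun h => lt_irrefl _ (hSgt j h)
        refine (hfix j ?_).le
        simp only [mem_union, not_or]
        exact ⟨⟨⟨by simp [leftOpeners, j], hjc⟩, fun h => hjS (filter_subset _ _ h)⟩,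
          fun h => hjS (filter_subset _ _ h)⟩
    · obtain ⟨x, hx⟩ := exists_max_eq_firstEnd τ
      rw [← hx, le_max_iff, Fin.le_def, Fin.le_def]
      by_cases hxo : (x : ℕ) < k / 2
      · have := (mem_filter.1 (hopen x (by simp [leftOpeners, hxo]))).2.1
        exact .inr (by simp only [j]; omega)
      · exact .inl (by simp only [j]; omega)
  ext x
  simp only [rightPart, hb, mem_filter, mem_univ, true_and, Fin.lt_def, j]
  refine ⟨fun ⟨hx, hτx⟩ => by_contra fun hxS => ?_, fun hx => ⟨hSgt x hx, hSgt _ (hSτ x hx)⟩⟩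
  have := (mem_filter.1 (hclose x (by simp [leftClosers, hxS]; omega))).2
  omega

end Decomposition

section Counting

variable {n k : ℕ} {S : Finset (Fin n)}

theorem card_isExchange_leftOpeners (hk : 1 ≤ k) (hkn : k ≤ n)
    (hS : S ∈ powersetCard (n - k) (rightRange n k)) :
    Nat.card {τ : Perm (Fin n) //
      IsExchange (leftOpeners n k) (leftClosers k S) (lowerHalf S) (upperHalf S) τ} =
      (k / 2)! * ((n - k) / 2)! := by
  obtain ⟨hsub, hcard⟩ := mem_powersetCard.1 hS
  have hS₁ : Disjoint (leftOpeners n k) S := disjoint_left.2 fun x hx hxS => by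
    have := (mem_filter.1 (hsub hxS)).2
    have := (mem_filter.1 hx).2
    omega
  have hS₂ : Disjoint (leftClosers k S) S := disjoint_left.2 fun x hx => (mem_filter.1 hx).2.2
  have hhalves : lowerHalf S ∪ upperHalf S ⊆ S :=
    union_subset (filter_subset _ _) (filter_subset _ _)
  rw [card_isExchange ?_ disjoint_lowerHalf_upperHalf
    (disjoint_union_left.2 ⟨hS₁.mono_right hhalves, hS₂.mono_right hhalves⟩)
    (by rw [card_leftOpeners hkn, card_leftClosers hk hkn hS])
    (by rw [card_lowerHalf, card_upperHalf]), card_leftOpeners hkn, card_lowerHalf, hcard]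
  refine disjoint_left.2 fun x hx hx' => ?_
  have := (mem_filter.1 hx).2
  have := (mem_filter.1 hx').2.1
  omega

theorem card_pairwiseOverlap_fiber [NeZero n] (hk : 1 ≤ k) (hkn : k ≤ n) :
    Nat.card {τ : Perm (Fin n) //
      Involutive τ ∧ PairwiseOverlap τ (rightPart τ) ∧ n - #(rightPart τ) = k} =
      (k / 2)! * ((n - k) / 2)! * (n - k / 2 - 1).choose (n - k) := by
  classical
  rw [Nat.card_eq_fintype_card, Fintype.card_subtype,
    card_eq_sum_card_fiberwise (f := fun τ : Perm (Fin n) => rightPart τ)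
      (t := powersetCard (n - k) (rightRange n k))
      fun τ hτ => rightPart_mem_powersetCard (mem_filter.1 hτ).2.1 (mem_filter.1 hτ).2.2.2]
  rw [sum_congr rfl fun S hS => ?_, sum_const, card_powersetCard, card_rightRange, smul_eq_mul,
    mul_comm]
  rw [filter_filter, ← Fintype.card_subtype, ← Nat.card_eq_fintype_card,
    ← card_isExchange_leftOpeners hk hkn hS]
  refine Nat.card_congr <| Equiv.subtypeEquivRight fun τ =>
    ⟨fun ⟨⟨hτ, hov, hk'⟩, hS'⟩ => ?_, fun h => ?_⟩
  · exact hS' ▸ isExchange_of_pairwiseOverlap hτ hov hk'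
  · have hR := rightPart_eq_of_isExchange hk hkn hS h
    have := (mem_powersetCard.1 hS).2
    exact ⟨⟨h.1, hR ▸ (h.exchangesHalves hS).pairwiseOverlap h.1, by rw [hR, this]; omega⟩, hR⟩

end Counting

end IAvoid123

open IAvoid123 in
/-- For `n ≥ 1`, the number of involutions of `[n]` that I-avoid 123 — i.e. with no
three pairwise independent cycles (fixed points counting as cycles) — equals
`Σ_{k=1}^n ⌊k/2⌋!·⌊(n−k)/2⌋!·C(n − ⌊k/2⌋ − 1, n − k)`. -/
theorem involutions_Iavoiding_123_card (n : ℕ) (hn : 1 ≤ n) :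
    Nat.card {τ : Equiv.Perm (Fin n) // Function.Involutive ⇑τ ∧
      ¬ ∃ a b c : Fin n, a ≤ τ a ∧ b ≤ τ b ∧ c ≤ τ c ∧ τ a < b ∧ τ b < c} =
    ∑ k ∈ Finset.Icc 1 n,
      Nat.factorial (k / 2) * Nat.factorial ((n - k) / 2) *
        Nat.choose (n - k / 2 - 1) (n - k) := by
  classical
  have : NeZero n := ⟨by omega⟩
  rw [Nat.card_congr (Equiv.subtypeEquivRight fun τ =>
      and_congr_right fun hτ => (not_congr (exists_pattern_iff hτ)).trans not_not),
    Nat.card_eq_fintype_card, Fintype.card_subtype,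
    card_eq_sum_card_fiberwise (f := fun τ : Perm (Fin n) => n - #(rightPart τ)) (t := Icc 1 n)
      fun τ _ => by have := card_rightPart_lt ⇑τ; simp only [coe_Icc, Set.mem_Icc]; omega]
  refine sum_congr rfl fun k hk => ?_
  rw [← card_pairwiseOverlap_fiber (mem_Icc.1 hk).1 (mem_Icc.1 hk).2, Nat.card_eq_fintype_card,
    Fintype.card_subtype, filter_filter]
  simp only [and_assoc]
end

section
/- An involution τ has no three pairwise independent cycles if and only if [n] can be partitioned into sets I and J such that the standardizations st(τ|_I) and st(τ|_J) are involutions each having no two independent cycles. Moreover, when this holds one may take I to be the union of the entries of the left-to-right minimal cycles of τ. -/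
/-- An involution `τ` of `[n]` has no three pairwise independent cycles iff `[n]` can
be partitioned into a `τ`-invariant set `I` and its complement such that within each
part no two cycles are independent. Moreover, when this holds, one may take `I` to be
the set `I(τ)` of entries of left-to-right minimum cycles of `τ`. -/
theorem no_three_independent_iff_union_of_two (n : ℕ) (τ : Equiv.Perm (Fin n))
    (hτ : Function.Involutive ⇑τ) :
    ((¬ ∃ a b c : Fin n, a ≤ τ a ∧ b ≤ τ b ∧ c ≤ τ c ∧ τ a < b ∧ τ b < c) ↔
      ∃ I : Set (Fin n), (∀ x, τ x ∈ I ↔ x ∈ I) ∧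
        (∀ a c : Fin n, a ∈ I → c ∈ I → a ≤ τ a → c ≤ τ c → ¬ τ a < c) ∧
        (∀ a c : Fin n, a ∉ I → c ∉ I → a ≤ τ a → c ≤ τ c → ¬ τ a < c)) ∧
    ((¬ ∃ a b c : Fin n, a ≤ τ a ∧ b ≤ τ b ∧ c ≤ τ c ∧ τ a < b ∧ τ b < c) →
      ((∀ x, τ x ∈ {x : Fin n | ¬ ∃ c : Fin n, c ≤ τ c ∧ τ c < x ∧ τ c < τ x} ↔
          x ∈ {x : Fin n | ¬ ∃ c : Fin n, c ≤ τ c ∧ τ c < x ∧ τ c < τ x}) ∧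
        (∀ a c : Fin n,
          a ∈ {x : Fin n | ¬ ∃ c : Fin n, c ≤ τ c ∧ τ c < x ∧ τ c < τ x} →
          c ∈ {x : Fin n | ¬ ∃ c : Fin n, c ≤ τ c ∧ τ c < x ∧ τ c < τ x} →
          a ≤ τ a → c ≤ τ c → ¬ τ a < c) ∧
        (∀ a c : Fin n,
          a ∉ {x : Fin n | ¬ ∃ c : Fin n, c ≤ τ c ∧ τ c < x ∧ τ c < τ x} →
          c ∉ {x : Fin n | ¬ ∃ c : Fin n, c ≤ τ c ∧ τ c < x ∧ τ c < τ x} →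
          a ≤ τ a → c ≤ τ c → ¬ τ a < c))) := by
  have key : (¬ ∃ a b c : Fin n, a ≤ τ a ∧ b ≤ τ b ∧ c ≤ τ c ∧ τ a < b ∧ τ b < c) →
      ((∀ x, τ x ∈ {x : Fin n | ¬ ∃ c : Fin n, c ≤ τ c ∧ τ c < x ∧ τ c < τ x} ↔
          x ∈ {x : Fin n | ¬ ∃ c : Fin n, c ≤ τ c ∧ τ c < x ∧ τ c < τ x}) ∧
        (∀ a c : Fin n,
          a ∈ {x : Fin n | ¬ ∃ c : Fin n, c ≤ τ c ∧ τ c < x ∧ τ c < τ x} →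
          c ∈ {x : Fin n | ¬ ∃ c : Fin n, c ≤ τ c ∧ τ c < x ∧ τ c < τ x} →
          a ≤ τ a → c ≤ τ c → ¬ τ a < c) ∧
        (∀ a c : Fin n,
          a ∉ {x : Fin n | ¬ ∃ c : Fin n, c ≤ τ c ∧ τ c < x ∧ τ c < τ x} →
          c ∉ {x : Fin n | ¬ ∃ c : Fin n, c ≤ τ c ∧ τ c < x ∧ τ c < τ x} →
          a ≤ τ a → c ≤ τ c → ¬ τ a < c)) := by
    intro H
    refine ⟨?_, ?_, ?_⟩
    · intro x
      simp only [Set.mem_setOf_eq, hτ x]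
      constructor
      · intro h hc
        obtain ⟨d, h1, h2, h3⟩ := hc
        exact h ⟨d, h1, h3, h2⟩
      · intro h hc
        obtain ⟨d, h1, h2, h3⟩ := hc
        exact h ⟨d, h1, h3, h2⟩
    · intro a c _ hc haa hcc hlt
      simp only [Set.mem_setOf_eq] at hc
      exact hc ⟨a, haa, hlt, lt_of_lt_of_le hlt hcc⟩
    · intro a c ha _ haa hcc hlt
      simp only [Set.mem_setOf_eq, not_not] at ha
      obtain ⟨d, h1, h2, _⟩ := ha
      exact H ⟨d, a, c, h1, haa, hcc, h2, hlt⟩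
  refine ⟨⟨fun H => ⟨_, key H⟩, ?_⟩, key⟩
  rintro ⟨I, hinv, h2, h3⟩ ⟨a, b, c, haa, hbb, hcc, hab, hbc⟩
  have hac : τ a < c := lt_trans (lt_of_lt_of_le hab hbb) hbc
  by_cases hA : a ∈ I <;> by_cases hB : b ∈ I <;> by_cases hC : c ∈ I
  · exact h2 a b hA hB haa hbb hab
  · exact h2 a b hA hB haa hbb hab
  · exact h2 a c hA hC haa hcc hac
  · exact h3 b c hB hC hbb hcc hbc
  · exact h2 b c hB hC hbb hcc hbc
  · exact h3 a c hA hC haa hcc hac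
  · exact h3 a b hA hB haa hbb hab
  · exact h3 a b hA hB haa hbb hab
end

section
/- Let τ be an involution of [n] with no three pairwise independent cycles, and let k = |I(τ)| where I(τ) is the set of entries belonging to left-to-right minimum cycles of τ. Then {1, 2, ..., ⌊k/2⌋ + 1} ⊆ I(τ). -/
/-- If `τ` is an involution of `[n]` with no three pairwise independent cycles and
`k = |I(τ)|` where `I(τ)` is the set of entries of left-to-right minimum cycles, then
the first `⌊k/2⌋ + 1` positions all belong to `I(τ)`. -/
theorem ltr_min_initial_segment (n : ℕ) (τ : Equiv.Perm (Fin n))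
    (hτ : Function.Involutive ⇑τ)
    (h : ¬ ∃ a b c : Fin n, a ≤ τ a ∧ b ≤ τ b ∧ c ≤ τ c ∧ τ a < b ∧ τ b < c)
    (k : ℕ)
    (hk : k = Set.ncard {x : Fin n | ¬ ∃ c : Fin n, c ≤ τ c ∧ τ c < x ∧ τ c < τ x}) :
    ∀ x : Fin n, (x : ℕ) < k / 2 + 1 →
      x ∈ {x : Fin n | ¬ ∃ c : Fin n, c ≤ τ c ∧ τ c < x ∧ τ c < τ x} := by
  intro x hx
  by_contra hmem
  simp only [Set.mem_setOf_eq, not_not] at hmem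
  obtain ⟨c, hc1, hc2, hc3⟩ := hmem
  set I := {x : Fin n | ¬ ∃ c : Fin n, c ≤ τ c ∧ τ c < x ∧ τ c < τ x} with hI
  set A : Set (Fin n) := Set.Iic (τ c) with hA
  set B : Set (Fin n) := (⇑τ) ⁻¹' A with hB
  have hτc : τ (τ c) = c := hτ c
  have hτcB : τ c ∈ B := by
    simp only [hB, Set.mem_preimage, hτc, hA, Set.mem_Iic]
    exact hc1
  have hsub : I ⊆ A ∪ (B \ {τ c}) := by
    intro y hy
    by_cases hyA : y ∈ A
    · exact Or.inl hyA
    · have hlt : τ c < y := lt_of_not_ge hyA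
      by_cases hyB : τ y ≤ τ c
      · refine Or.inr ⟨hyB, ?_⟩
        simp only [Set.mem_singleton_iff]
        exact fun he => absurd he.symm (ne_of_lt hlt)
      · exact absurd ⟨c, hc1, hlt, lt_of_not_ge hyB⟩ hy
  have hcardA : A.ncard = (τ c : ℕ) + 1 := by
    rw [hA, ← Finset.coe_Iic, Set.ncard_coe_finset, Fin.card_Iic]
  have hBimg : B = ⇑τ '' A := by
    ext y
    simp only [hB, Set.mem_preimage, Set.mem_image]
    constructor
    · intro hy; exact ⟨τ y, hy, hτ y⟩
    · rintro ⟨z, hz, rfl⟩; rwa [hτ z]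
  have hcardB : B.ncard = (τ c : ℕ) + 1 := by
    rw [hBimg, Set.ncard_image_of_injective _ τ.injective, hcardA]
  have hcardB' : (B \ {τ c}).ncard = (τ c : ℕ) := by
    rw [Set.ncard_diff_singleton_of_mem hτcB, hcardB]; omega
  have hunion : (A ∪ (B \ {τ c})).ncard ≤ A.ncard + (B \ {τ c}).ncard :=
    Set.ncard_union_le _ _
  have hkle : k ≤ 2 * (τ c : ℕ) + 1 := by
    have h1 : I.ncard ≤ (A ∪ (B \ {τ c})).ncard :=
      Set.ncard_le_ncard hsub (Set.toFinite _)
    rw [hk]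
    omega
  have h2x : 2 * (x : ℕ) ≤ k := by
    have hx' : (x : ℕ) ≤ k / 2 := Nat.lt_succ_iff.mp hx
    omega
  have hlt : (τ c : ℕ) < (x : ℕ) := hc2
  omega
end

section
/- Let R be a set of fixed-point-free involutions, S ⊆ [n] with |S| = m. The number of involutions τ of [n] with fixed-point set exactly S such that no subset K ⊆ [n] with τ(K) = K yields st(τ|_K) ∈ R-closure (i.e., τ I-avoids every pattern in R) equals the number of fixed-point-free involutions of [n−m] that I-avoid every pattern in R. In particular, the number of involutions of [n] with exactly m fixed points I-avoiding R equals C(n,m) times the number of fixed-point-free involutions of [n−m] I-avoiding R. -/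
/-- `τ` I-avoids every pattern in the family `R` of fixed-point-free involution
patterns: there is no occurrence of any `ρ ∈ R k` in `τ` that is a union of cycles of
`τ` (entries paired in `ρ` are paired in `τ`). -/
def IAvoidsFPF (n : ℕ) (τ : Equiv.Perm (Fin n))
    (R : (k : ℕ) → Set (Equiv.Perm (Fin k))) : Prop :=
  ∀ k : ℕ, ∀ ρ ∈ R k, ¬ ∃ f : Fin k → Fin n, StrictMono f ∧ ∀ a, τ (f a) = f (ρ a)

/-!
Removing the fixed points of an involution `τ` with fixed-point set `S` and standardizing leaves a
fixed-point-free involution of `[n - m]`, and every such involution arises from exactly one `τ`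
(put back the identity on `S`). Since every pattern of `R` is fixed-point free, each of its
occurrences in `τ` lives on the non-fixed points, so this bijection preserves I-avoidance of `R`.
Summing over the `C(n, m)` choices of `S` gives the second count.
-/

open Finset Equiv Function

theorem Function.involutive_iff_of_semiconj {α β : Type*} {e : β → α} (he : e.Injective)
    {ρ : β → β} {τ : α → α} (hsc : Semiconj e ρ τ) (hfix : ∀ a ∉ Set.range e, τ a = a) :
    τ.Involutive ↔ ρ.Involutive := by
  refine ⟨fun hτ b => he ?_, fun hρ a => ?_⟩
  · rw [hsc, hsc, hτ]
  · by_cases ha : a ∈ Set.range e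
    · obtain ⟨b, rfl⟩ := ha
      rw [← hsc, ← hsc, hρ]
    · rw [hfix a ha, hfix a ha]

section Avoidance

variable {k n : ℕ} {R : (j : ℕ) → Set (Perm (Fin j))} {e : Fin k ↪o Fin n}
  {ρ : Perm (Fin k)} {τ : Perm (Fin n)}

theorem iAvoidsFPF_iff_of_semiconj (hR : ∀ j, ∀ σ ∈ R j, ∀ i, σ i ≠ i) (hsc : Semiconj e ρ τ)
    (hfix : ∀ x ∉ Set.range e, τ x = x) : IAvoidsFPF n τ R ↔ IAvoidsFPF k ρ R := by
  constructor
  · rintro hτ j σ hσ ⟨f, hf, hocc⟩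
    exact hτ j σ hσ ⟨e ∘ f, e.strictMono.comp hf, fun a => by simp [← hsc _, hocc]⟩
  · rintro hρ j σ hσ ⟨f, hf, hocc⟩
    -- every point of an occurrence of a fixed-point-free pattern is moved by `τ`
    have hrange : ∀ a, f a ∈ Set.range e := fun a =>
      not_not.1 fun h => hR j σ hσ a (hf.injective (by rw [← hocc, hfix _ h]))
    choose g hg using hrange
    refine hρ j σ hσ ⟨g, fun a b hab => ?_, fun a => e.injective ?_⟩
    · simpa [← e.lt_iff_lt, hg] using hf hab
    · rw [hsc, hg, hg, hocc]

end Avoidance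

theorem Nat.card_subtype_and_congr {α β : Type*} {p P : α → Prop} {q Q : β → Prop}
    (e : {a // p a} ≃ {b // q b}) (h : ∀ a, P a.1 ↔ Q (e a).1) :
    Nat.card {a // p a ∧ P a} = Nat.card {b // q b ∧ Q b} :=
  Nat.card_congr <| (subtypeSubtypeEquivSubtypeInter p P).symm.trans <|
    (e.subtypeEquiv h).trans (subtypeSubtypeEquivSubtypeInter q Q)

section FixedPoints

variable {n k : ℕ} (S : Finset (Fin n))

/-- A derangement of `Fin k` acts on `Sᶜ` through the increasing enumeration of `Sᶜ`, and is
extended by the identity on `S`. -/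
noncomputable def derangementsEquivFixedPointsEq (hc : #Sᶜ = k) :
    derangements (Fin k) ≃ {τ : Perm (Fin n) // {i | τ i = i} = ↑S} :=
  ((Sᶜ.orderIsoOfFin hc).toEquiv.derangementsCongr.trans
    (derangements.subtypeEquiv (· ∈ Sᶜ))).trans
      (subtypeEquivRight fun τ => by simp [Set.ext_iff, IsFixedPt, iff_comm])

theorem semiconj_derangementsEquivFixedPointsEq (hc : #Sᶜ = k) (ρ : derangements (Fin k)) :
    Semiconj (Sᶜ.orderEmbOfFin hc) ρ (derangementsEquivFixedPointsEq S hc ρ).1 := fun i => by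
  change _ = Perm.ofSubtype ((Sᶜ.orderIsoOfFin hc).toEquiv.permCongr ρ.1) (Sᶜ.orderIsoOfFin hc i)
  rw [Perm.ofSubtype_apply_coe, permCongr_apply]
  simp

theorem derangementsEquivFixedPointsEq_apply_of_notMem_range (hc : #Sᶜ = k)
    (ρ : derangements (Fin k)) :
    ∀ x ∉ Set.range (Sᶜ.orderEmbOfFin hc), (derangementsEquivFixedPointsEq S hc ρ).1 x = x := by
  intro x hx
  refine (Set.ext_iff.1 (derangementsEquivFixedPointsEq S hc ρ).2 x).2 ?_
  simpa using hx

theorem card_involutive_avoiding_fixedPoints_eq (hc : #Sᶜ = k)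
    {R : (j : ℕ) → Set (Perm (Fin j))}
    (hR : ∀ j, ∀ σ ∈ R j, ∀ i, σ i ≠ i) :
    Nat.card {τ : Perm (Fin n) // Involutive ⇑τ ∧ {i | τ i = i} = ↑S ∧ IAvoidsFPF n τ R} =
      Nat.card {ρ : Perm (Fin k) // Involutive ⇑ρ ∧ (∀ i, ρ i ≠ i) ∧ IAvoidsFPF k ρ R} := by
  have key := Nat.card_subtype_and_congr (derangementsEquivFixedPointsEq S hc)
    (P := fun ρ : Perm (Fin k) => Involutive ⇑ρ ∧ IAvoidsFPF k ρ R)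
    (Q := fun τ : Perm (Fin n) => Involutive ⇑τ ∧ IAvoidsFPF n τ R) fun ρ =>
      have hsc := semiconj_derangementsEquivFixedPointsEq S hc ρ
      have hfix := derangementsEquivFixedPointsEq_apply_of_notMem_range S hc ρ
      and_congr (involutive_iff_of_semiconj (Sᶜ.orderEmbOfFin hc).injective hsc hfix).symm
        (iAvoidsFPF_iff_of_semiconj hR hsc hfix).symm
  rw [Nat.card_congr (subtypeEquivRight fun _ => and_left_comm), ← key,
    Nat.card_congr (subtypeEquivRight fun _ => and_left_comm)]
  rfl

end FixedPoints

theorem card_eq_sum_card_fixedPoints_eq {n : ℕ} (P Q : Perm (Fin n) → Prop) (m : ℕ) :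
    Nat.card {τ : Perm (Fin n) // P τ ∧ Nat.card {i // τ i = i} = m ∧ Q τ} =
      ∑ S ∈ powersetCard m (univ : Finset (Fin n)),
        Nat.card {τ : Perm (Fin n) // P τ ∧ {i | τ i = i} = ↑S ∧ Q τ} := by
  classical
  simp only [Nat.card_eq_fintype_card, Fintype.card_subtype]
  rw [card_eq_sum_card_fiberwise (t := powersetCard m univ)
    (f := fun τ : Perm (Fin n) => ({i | τ i = i} : Finset (Fin n)))]
  · refine sum_congr rfl fun S hS => congrArg card ?_
    ext τ
    have hfix : ({i | τ i = i} : Finset (Fin n)) = S ↔ {i | τ i = i} = (S : Set (Fin n)) := by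
      rw [← coe_inj, coe_filter]
      simp
    simp only [mem_filter, mem_univ, true_and, ← hfix]
    constructor
    · rintro ⟨⟨hP, -, hQ⟩, h⟩
      exact ⟨hP, h, hQ⟩
    · rintro ⟨hP, rfl, hQ⟩
      exact ⟨⟨hP, (mem_powersetCard_univ.1 hS), hQ⟩, rfl⟩
  · intro τ hτ
    rw [mem_coe, mem_filter] at hτ
    rw [mem_coe, mem_powersetCard_univ]
    exact hτ.2.2.1

/-- For a family `R` of fixed-point-free involution patterns and `S ⊆ [n]` with
`|S| = m`, the number of involutions of `[n]` with fixed-point set exactly `S`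
I-avoiding `R` equals the number of fixed-point-free involutions of `[n−m]`
I-avoiding `R`; in particular the number of involutions of `[n]` with exactly `m`
fixed points I-avoiding `R` is `C(n,m)` times that quantity. -/
theorem fixed_point_removal (n : ℕ) (R : (k : ℕ) → Set (Equiv.Perm (Fin k)))
    (hR : ∀ k, ∀ ρ ∈ R k, Function.Involutive ⇑ρ ∧ ∀ i, ρ i ≠ i)
    (S : Finset (Fin n)) (m : ℕ) (hm : m = S.card) :
    Nat.card {τ : Equiv.Perm (Fin n) // Function.Involutive ⇑τ ∧
        {i : Fin n | τ i = i} = ↑S ∧ IAvoidsFPF n τ R} =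
      Nat.card {ρ : Equiv.Perm (Fin (n - m)) // Function.Involutive ⇑ρ ∧
        (∀ i, ρ i ≠ i) ∧ IAvoidsFPF (n - m) ρ R} ∧
    Nat.card {τ : Equiv.Perm (Fin n) // Function.Involutive ⇑τ ∧
        Nat.card {i : Fin n // τ i = i} = m ∧ IAvoidsFPF n τ R} =
      Nat.choose n m *
        Nat.card {ρ : Equiv.Perm (Fin (n - m)) // Function.Involutive ⇑ρ ∧
          (∀ i, ρ i ≠ i) ∧ IAvoidsFPF (n - m) ρ R} := by
  have hR' : ∀ j, ∀ σ ∈ R j, ∀ i, σ i ≠ i := fun j σ hσ => (hR j σ hσ).2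
  have hc : ∀ {T : Finset (Fin n)}, #T = m → #Tᶜ = n - m := fun hT => by
    rw [card_compl, Fintype.card_fin, hT]
  refine ⟨card_involutive_avoiding_fixedPoints_eq S (hc hm.symm) hR', ?_⟩
  rw [card_eq_sum_card_fixedPoints_eq, sum_congr rfl fun T hT =>
      card_involutive_avoiding_fixedPoints_eq T (hc (mem_powersetCard_univ.1 hT)) hR',
    sum_const, card_powersetCard, card_univ, Fintype.card_fin, smul_eq_mul]
end

section
/- For all n, the number of involutions of [n] I-avoiding the pattern 2143 (as a fixed-point-free involution pattern, i.e., requiring the occurrence to be a union of cycles) equals Σ_{k=0}^{⌊n/2⌋} C(n,2k)·k!. -/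
/-!
In an involution `τ` with no two arcs `a < τ a < c < τ c`, every opener (`x < τ x`) lies below
every closer (`τ x < x`). On its support `S`, of size `2k`, the openers are therefore exactly the
`k` smallest elements of `S`, and `τ` amounts to a bijection from them onto the `k` largest ones:
`k!` choices. Summing over the supports gives `∑ C(n, 2k) k!`.
-/

open Equiv Finset Function Nat

theorem Finset.sum_range_eq_sum_range_two_mul {M : Type*} [AddCommMonoid M] {f : ℕ → M}
    (hf : ∀ m, ¬Even m → f m = 0) (n : ℕ) :
    ∑ m ∈ range (n + 1), f m = ∑ k ∈ range (n / 2 + 1), f (2 * k) := by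
  rw [← sum_filter_of_ne (p := Even) fun m _ => not_imp_comm.1 (hf m)]
  refine (sum_nbij' (2 * ·) (· / 2) (fun k hk => ?_) (fun m hm => ?_) (fun k _ => ?_)
    (fun m hm => ?_) fun _ _ => rfl).symm
  · simp only [mem_filter, mem_range] at hk ⊢
    exact ⟨by omega, even_two_mul k⟩
  · simp only [mem_filter, mem_range] at hm ⊢
    omega
  · omega
  · exact Nat.two_mul_div_two_of_even (mem_filter.1 hm).2

namespace Equiv.Perm

section Subtype

variable {α : Type*} {p : α → Prop} [DecidablePred p]

theorem involutive_iff_mul_self_eq_one {τ : Perm α} : Involutive τ ↔ τ * τ = 1 := by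
  simp [Involutive, Perm.ext_iff]

theorem involutive_ofSubtype_iff {σ : Perm (Subtype p)} :
    Involutive (ofSubtype σ) ↔ Involutive σ := by
  rw [involutive_iff_mul_self_eq_one, involutive_iff_mul_self_eq_one, ← map_mul,
    map_eq_one_iff _ ofSubtype_injective]

theorem support_ofSubtype_eq_iff [Fintype α] [DecidableEq α] {S : Finset α} {σ : Perm S} :
    (ofSubtype σ).support = S ↔ ∀ x, σ x ≠ x := by
  rw [support_ofSubtype, Finset.ext_iff]
  constructor
  · intro h x
    simpa using (h x).2 x.2
  · intro h x
    simp [h]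

def swapAlong (e : {x // p x} ≃ {x // ¬p x}) : α → α :=
  fun x => if h : p x then e ⟨x, h⟩ else e.symm ⟨x, h⟩

theorem swapAlong_involutive (e : {x // p x} ≃ {x // ¬p x}) : Involutive (swapAlong e) := by
  intro x
  by_cases h : p x
  · simp [swapAlong, h, (e ⟨x, h⟩).2]
  · simp [swapAlong, h, (e.symm ⟨x, h⟩).2]

theorem apply_swapAlong_iff (e : {x // p x} ≃ {x // ¬p x}) (x : α) :
    p (swapAlong e x) ↔ ¬p x := by
  by_cases h : p x
  · simp [swapAlong, h, (e ⟨x, h⟩).2]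
  · simp [swapAlong, h, (e.symm ⟨x, h⟩).2]

variable (p) in
def involutiveSwapEquiv :
    {τ : Perm α // Involutive τ ∧ ∀ x, p (τ x) ↔ ¬p x} ≃ ({x // p x} ≃ {x // ¬p x}) where
  toFun τ := τ.1.subtypeEquiv fun x => by rw [τ.2.2, not_not]
  invFun e := ⟨(swapAlong_involutive e).toPerm, swapAlong_involutive e, apply_swapAlong_iff e⟩
  left_inv τ := by
    ext x
    by_cases h : p x
    · simp [swapAlong, h]
    · simp [swapAlong, h, symm_apply_eq, τ.2.1 x]
  right_inv e := by
    ext x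
    simp [swapAlong, x.2]

end Subtype

section LinearOrder

variable {α : Type*} [LinearOrder α] {τ : Perm α}

/-- For an involution, two arcs `a < τ a < c < τ c` are exactly an occurrence of `2143` made of
two of its 2-cycles. -/
def NoAlignedArcs (τ : Perm α) : Prop :=
  ∀ a c, a < τ a → c < τ c → ¬τ a < c

theorem NoAlignedArcs.lt_of_lt_apply_of_apply_lt (hA : NoAlignedArcs τ) (hτ : Involutive τ)
    {a c : α} (ha : a < τ a) (hc : τ c < c) : a < c := by
  have hca := hA (τ c) a (by rwa [hτ c]) ha
  rw [hτ c, not_lt] at hca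
  exact hca.lt_of_ne (by rintro rfl; exact lt_asymm ha hc)

theorem isLowerSet_setOf_lt_apply (hτ : Involutive τ) (hA : NoAlignedArcs τ)
    (hfix : ∀ x, τ x ≠ x) : IsLowerSet {x | x < τ x} := by
  intro a w hwa ha
  by_contra hw
  have hw' : τ w < w := (hfix w).lt_of_le (not_lt.1 hw)
  exact (hwa.trans_lt (hA.lt_of_lt_apply_of_apply_lt hτ ha hw')).false

theorem noAlignedArcs_ofSubtype_iff {p : α → Prop} [DecidablePred p] {σ : Perm (Subtype p)} :
    NoAlignedArcs (ofSubtype σ) ↔ NoAlignedArcs σ := by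
  have hmem : ∀ {a}, a < ofSubtype σ a → p a := fun {a} ha => by_contra fun h => by
    rw [ofSubtype_apply_of_not_mem σ h] at ha
    exact lt_irrefl a ha
  constructor
  · intro h a c ha hc
    simpa using h a c (by simpa using ha) (by simpa using hc)
  · intro h a c ha hc
    lift a to Subtype p using hmem ha
    lift c to Subtype p using hmem hc
    simp only [ofSubtype_apply_coe, Subtype.coe_lt_coe] at ha hc ⊢
    exact h a c ha hc

variable [Fintype α]

theorem two_mul_card_filter_lt_apply (hτ : Involutive τ) (hfix : ∀ x, τ x ≠ x) :
    2 * #{x | x < τ x} = Fintype.card α := by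
  have hclosers : #({x | ¬x < τ x} : Finset α) = #{x | x < τ x} := by
    refine card_nbij' τ τ (fun x hx => ?_) (fun x hx => ?_) (fun x _ => hτ x) (fun x _ => hτ x)
    · simp only [coe_filter, mem_univ, true_and, Set.mem_ofPred_eq] at hx ⊢
      rw [hτ x]
      exact (hfix x).lt_of_le (not_lt.1 hx)
    · simp only [coe_filter, mem_univ, true_and, Set.mem_ofPred_eq] at hx ⊢
      rw [hτ x]
      exact lt_asymm hx
  rw [two_mul]
  nth_rw 2 [← hclosers]
  exact card_filter_add_card_filter_not _

theorem filter_lt_apply_eq_of_isLowerSet (hτ : Involutive τ) (hA : NoAlignedArcs τ)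
    (hfix : ∀ x, τ x ≠ x) {L : Finset α} (hL : IsLowerSet (L : Set α))
    (hcard : 2 * #L = Fintype.card α) : ({x | x < τ x} : Finset α) = L := by
  have hlower : IsLowerSet (({x | x < τ x} : Finset α) : Set α) := by
    rw [coe_filter_univ]
    exact isLowerSet_setOf_lt_apply hτ hA hfix
  have hsize : #({x | x < τ x} : Finset α) = #L := by
    have := two_mul_card_filter_lt_apply hτ hfix
    omega
  -- lower sets of a linear order are nested, so two of the same size coincide
  rcases hlower.total hL with h | h
  · exact eq_of_subset_of_card_le (coe_subset.1 h) hsize.ge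
  · exact (eq_of_subset_of_card_le (coe_subset.1 h) hsize.le).symm

theorem involutive_noAlignedArcs_fixedPointFree_iff {L : Finset α}
    (hL : IsLowerSet (L : Set α)) (hcard : 2 * #L = Fintype.card α) :
    Involutive τ ∧ NoAlignedArcs τ ∧ (∀ x, τ x ≠ x) ↔ Involutive τ ∧ ∀ x, τ x ∈ L ↔ x ∉ L := by
  constructor
  · rintro ⟨hτ, hA, hfix⟩
    refine ⟨hτ, fun x => ?_⟩
    simp only [← filter_lt_apply_eq_of_isLowerSet hτ hA hfix hL hcard, mem_filter, mem_univ,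
      true_and, hτ x]
    exact ⟨fun h => lt_asymm h, fun h => (hfix x).lt_of_le (not_lt.1 h)⟩
  · rintro ⟨hτ, hswap⟩
    have hfix : ∀ x, τ x ≠ x := fun x h => by simpa [h] using hswap x
    have hopener : ∀ x, x < τ x ↔ x ∈ L := fun x =>
      ⟨fun h => by_contra fun hx => hx (hL h.le ((hswap x).2 hx)),
        fun hx => not_le.1 fun h => (hswap x).1 (hL h hx) hx⟩
    exact ⟨hτ, fun a c ha hc hac => (hswap a).1 (hL hac.le ((hopener c).1 hc)) ((hopener a).1 ha),
      hfix⟩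

theorem card_involutive_noAlignedArcs_fixedPointFree_of_isLowerSet {L : Finset α}
    (hL : IsLowerSet (L : Set α)) (hcard : 2 * #L = Fintype.card α) :
    Nat.card {τ : Perm α // Involutive τ ∧ NoAlignedArcs τ ∧ ∀ x, τ x ≠ x} = (#L)! := by
  rw [Nat.card_congr
      (subtypeEquivRight fun τ => involutive_noAlignedArcs_fixedPointFree_iff hL hcard),
    Nat.card_congr (involutiveSwapEquiv (· ∈ L)), Nat.card_eq_fintype_card, Fintype.card_equiv,
    Fintype.card_coe]
  refine Fintype.equivOfCardEq ?_
  rw [Fintype.card_subtype_compl, Fintype.card_coe]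
  omega

theorem exists_isLowerSet_card_eq {k : ℕ} (hk : k ≤ Fintype.card α) :
    ∃ L : Finset α, IsLowerSet (L : Set α) ∧ #L = k := by
  let e := Fintype.orderIsoFinOfCardEq α rfl
  refine ⟨({x | (e.symm x : ℕ) < k} : Finset α), fun a b hba ha => ?_, ?_⟩
  · simp only [coe_filter, mem_univ, true_and, Set.mem_ofPred_eq] at ha ⊢
    exact lt_of_le_of_lt (e.symm.monotone hba) ha
  · rw [card_equiv e.symm.toEquiv (t := ({i | (i : ℕ) < k} : Finset (Fin _))) (by simp),
      Fin.card_filter_val_lt, min_eq_right hk]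

theorem card_involutive_noAlignedArcs_fixedPointFree :
    Nat.card {τ : Perm α // Involutive τ ∧ NoAlignedArcs τ ∧ ∀ x, τ x ≠ x} =
      if Even (Fintype.card α) then (Fintype.card α / 2)! else 0 := by
  split_ifs with h
  · obtain ⟨L, hL, hcard⟩ := exists_isLowerSet_card_eq (Nat.div_le_self (Fintype.card α) 2)
    rw [card_involutive_noAlignedArcs_fixedPointFree_of_isLowerSet hL
      (by rw [hcard, Nat.two_mul_div_two_of_even h]), hcard]
  · rw [Nat.card_eq_zero]
    left
    refine ⟨fun ⟨τ, hτ, _, hfix⟩ => h ?_⟩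
    rw [← two_mul_card_filter_lt_apply hτ hfix]
    exact even_two_mul _

theorem card_involutive_noAlignedArcs_fixedPointFree_eq_card_support_eq
    (S : Finset α) :
    Nat.card {σ : Perm S // Involutive σ ∧ NoAlignedArcs σ ∧ ∀ x, σ x ≠ x} =
      Nat.card {τ : Perm α // (Involutive τ ∧ NoAlignedArcs τ) ∧ τ.support = S} := by
  have hiff (σ : Perm S) : (Involutive σ ∧ NoAlignedArcs σ ∧ ∀ x, σ x ≠ x) ↔
      (Involutive (ofSubtype σ) ∧ NoAlignedArcs (ofSubtype σ)) ∧ (ofSubtype σ).support = S := by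
    rw [involutive_ofSubtype_iff, noAlignedArcs_ofSubtype_iff, support_ofSubtype_eq_iff, and_assoc]
  refine Nat.card_eq_of_bijective (fun σ => ⟨ofSubtype σ.1, (hiff σ.1).1 σ.2⟩) ⟨?_, ?_⟩
  · exact fun σ σ' h => Subtype.ext (ofSubtype_injective (congrArg Subtype.val h))
  · rintro ⟨τ, hτ, rfl⟩
    let σ : Perm τ.support := τ.subtypePerm fun _ => apply_mem_support
    have hof : ofSubtype σ = τ := ofSubtype_subtypePerm _ fun _ => mem_support.2
    refine ⟨⟨σ, (hiff σ).2 ?_⟩, Subtype.ext hof⟩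
    rw [hof]
    exact ⟨hτ, rfl⟩

theorem card_involutive_noAlignedArcs_eq_sum :
    Nat.card {τ : Perm α // Involutive τ ∧ NoAlignedArcs τ} =
      ∑ S : Finset α, Nat.card {σ : Perm S // Involutive σ ∧ NoAlignedArcs σ ∧ ∀ x, σ x ≠ x} := by
  classical
  rw [Nat.card_eq_fintype_card, Fintype.card_subtype,
    card_eq_sum_card_fiberwise (f := support) (t := univ) fun _ _ => mem_univ _]
  refine sum_congr rfl fun S _ => ?_
  rw [card_involutive_noAlignedArcs_fixedPointFree_eq_card_support_eq, filter_filter,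
    Nat.card_eq_fintype_card, Fintype.card_subtype]

end LinearOrder

end Equiv.Perm

/-- For all `n`, the number of involutions of `[n]` I-avoiding the fixed-point-free
pattern 2143 — i.e. with no two independent 2-cycles `(a,b)`, `(c,d)` with
`a < b < c < d` — equals `Σ_{k=0}^{⌊n/2⌋} C(n,2k)·k!`. -/
theorem involutions_Iavoiding_2143_card (n : ℕ) :
    Nat.card {τ : Equiv.Perm (Fin n) // Function.Involutive ⇑τ ∧
      ∀ a c : Fin n, a < τ a → c < τ c → ¬ τ a < c} =
    ∑ k ∈ Finset.range (n / 2 + 1), Nat.choose n (2 * k) * Nat.factorial k := by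
  change Nat.card {τ : Perm (Fin n) // Involutive τ ∧ τ.NoAlignedArcs} = _
  simp only [Perm.card_involutive_noAlignedArcs_eq_sum,
    Perm.card_involutive_noAlignedArcs_fixedPointFree, Fintype.card_coe]
  rw [← powerset_univ, sum_powerset_apply_card fun m => if Even m then (m / 2)! else 0,
    Finset.card_univ, Fintype.card_fin, sum_range_eq_sum_range_two_mul (fun m hm => by simp [hm])]
  refine sum_congr rfl fun k _ => ?_
  simp
end

section
/- For a fixed-point-free involution pattern ρ of [2k], if every involution that classically contains ρ also I-contains ρ within the class of fixed-point-free involutions (i.e., F(ρ) = F ∩ S(ρ)), then ρ(i) > k for all i ∈ [k]. -/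
/-- The "permutational matching" involution on `Fin (4*k)` built from `ρ`:
position `i < 2k` is paired with `2k + ρ(i)`. -/
def kappaFun (k : ℕ) (ρ : Equiv.Perm (Fin (2 * k))) : Fin (4 * k) → Fin (4 * k) :=
  fun x =>
    if h : (x : ℕ) < 2 * k then
      ⟨2 * k + ((ρ ⟨(x : ℕ), h⟩ : Fin (2 * k)) : ℕ), by
        have := (ρ (⟨(x : ℕ), h⟩ : Fin (2 * k))).isLt; omega⟩
    else
      ⟨((ρ ⟨(x : ℕ) - 2 * k, by have := x.isLt; omega⟩ : Fin (2 * k)) : ℕ), by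
        have := (ρ (⟨(x : ℕ) - 2 * k, by have := x.isLt; omega⟩ : Fin (2 * k))).isLt; omega⟩

lemma kappaFun_val_pos (k : ℕ) (ρ : Equiv.Perm (Fin (2 * k))) (x : Fin (4 * k))
    (h : (x : ℕ) < 2 * k) :
    ((kappaFun k ρ x : Fin (4 * k)) : ℕ) = 2 * k + ((ρ ⟨(x : ℕ), h⟩ : Fin (2 * k)) : ℕ) := by
  simp [kappaFun, h]

lemma kappaFun_val_neg (k : ℕ) (ρ : Equiv.Perm (Fin (2 * k))) (x : Fin (4 * k))
    (h : ¬ (x : ℕ) < 2 * k) :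
    ((kappaFun k ρ x : Fin (4 * k)) : ℕ) =
      ((ρ ⟨(x : ℕ) - 2 * k, by have := x.isLt; omega⟩ : Fin (2 * k)) : ℕ) := by
  simp [kappaFun, h]

lemma kappaFun_invol (k : ℕ) (ρ : Equiv.Perm (Fin (2 * k)))
    (hρ : Function.Involutive ⇑ρ) : Function.Involutive (kappaFun k ρ) := by
  intro x
  by_cases h : (x : ℕ) < 2 * k
  · have h1 := kappaFun_val_pos k ρ x h
    have h2 : ¬ ((kappaFun k ρ x : Fin (4 * k)) : ℕ) < 2 * k := by omega
    apply Fin.ext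
    rw [kappaFun_val_neg k ρ _ h2]
    have harg : (⟨((kappaFun k ρ x : Fin (4 * k)) : ℕ) - 2 * k, by
        have := (kappaFun k ρ x).isLt; omega⟩ : Fin (2 * k)) = ρ ⟨(x : ℕ), h⟩ := by
      apply Fin.ext; simp [h1]
    rw [harg, hρ]
  · have h1 := kappaFun_val_neg k ρ x h
    have h2 : ((kappaFun k ρ x : Fin (4 * k)) : ℕ) < 2 * k := by
      rw [h1]; exact (ρ _).isLt
    apply Fin.ext
    rw [kappaFun_val_pos k ρ _ h2]
    have harg : (⟨((kappaFun k ρ x : Fin (4 * k)) : ℕ), h2⟩ : Fin (2 * k)) =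
        ρ ⟨(x : ℕ) - 2 * k, by have := x.isLt; omega⟩ := by
      apply Fin.ext; simp [h1]
    rw [harg, hρ]
    simp
    have := x.isLt
    omega

/-- If for a fixed-point-free involution pattern `ρ` of `[2k]`, classical containment
and I-containment of `ρ` coincide on all fixed-point-free involutions, then
`ρ(i) > k` for all `i ∈ [k]` (i.e. `ρ` is a permutational matching). -/
theorem singleton_basis_necessity (k : ℕ) (ρ : Equiv.Perm (Fin (2 * k)))
    (hρ : Function.Involutive ⇑ρ) (hfpf : ∀ i, ρ i ≠ i)
    (H : ∀ n : ℕ, ∀ κ : Equiv.Perm (Fin n), Function.Involutive ⇑κ → (∀ i, κ i ≠ i) →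
      ((∃ f : Fin (2 * k) → Fin n, StrictMono f ∧
          ∀ a b : Fin (2 * k), κ (f a) < κ (f b) ↔ ρ a < ρ b) ↔
        ∃ f : Fin (2 * k) → Fin n, StrictMono f ∧ ∀ a, κ (f a) = f (ρ a))) :
    ∀ i : Fin (2 * k), (i : ℕ) < k → k ≤ ((ρ i : Fin (2 * k)) : ℕ) := by
  intro i hi
  by_contra hge
  push_neg at hge
  -- a pair of `ρ` entirely in the first half
  obtain ⟨a, b, hab, hbk, hrab⟩ :
      ∃ a b : Fin (2 * k), a < b ∧ (b : ℕ) < k ∧ ρ a = b := by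
    rcases lt_or_gt_of_ne (hfpf i) with h | h
    · exact ⟨ρ i, i, h, hi, hρ i⟩
    · exact ⟨i, ρ i, h, hge, rfl⟩
  -- a pair of `ρ` entirely in the second half (counting argument)
  have hsec : ∃ c : Fin (2 * k), k ≤ (c : ℕ) ∧ k ≤ ((ρ c : Fin (2 * k)) : ℕ) := by
    by_contra hc
    push_neg at hc
    set φ : Fin k → Fin k := fun j =>
      ⟨((ρ ⟨k + (j : ℕ), by have := j.isLt; omega⟩ : Fin (2 * k)) : ℕ),
        hc _ (by simp)⟩ with hφ
    have hinj : Function.Injective φ := by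
      intro j1 j2 hj
      have : ρ ⟨k + (j1 : ℕ), by have := j1.isLt; omega⟩ =
          ρ ⟨k + (j2 : ℕ), by have := j2.isLt; omega⟩ := by
        apply Fin.ext
        simpa [hφ, Fin.ext_iff] using hj
      have := ρ.injective this
      simp [Fin.ext_iff] at this
      exact Fin.ext (by omega)
    have hsurj : Function.Surjective φ := Finite.surjective_of_injective hinj
    obtain ⟨j, hj⟩ := hsurj ⟨(i : ℕ), hi⟩
    have : ρ ⟨k + (j : ℕ), by have := j.isLt; omega⟩ = i := by
      apply Fin.ext
      simpa [hφ, Fin.ext_iff] using hj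
    have h4 : (⟨k + (j : ℕ), by have := j.isLt; omega⟩ : Fin (2 * k)) = ρ i := by
      have h5 := congrArg ρ this
      rwa [hρ _] at h5
    have := congrArg Fin.val h4
    simp at this
    omega
  obtain ⟨c0, hkc0, hkrc0⟩ := hsec
  obtain ⟨c, d, hcd, hkc, hrcd⟩ :
      ∃ c d : Fin (2 * k), c < d ∧ k ≤ (c : ℕ) ∧ ρ c = d := by
    rcases lt_or_gt_of_ne (hfpf c0) with h | h
    · exact ⟨ρ c0, c0, h, hkrc0, hρ c0⟩
    · exact ⟨c0, ρ c0, h, hkc0, rfl⟩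
  -- the counterexample involution κ on Fin (4k)
  have hinv := kappaFun_invol k ρ hρ
  set κ : Equiv.Perm (Fin (4 * k)) := hinv.toPerm (kappaFun k ρ) with hκ
  have hκcoe : ⇑κ = kappaFun k ρ := rfl
  have hκinv : Function.Involutive ⇑κ := by rw [hκcoe]; exact hinv
  have hκfpf : ∀ x, κ x ≠ x := by
    intro x hx
    rw [hκcoe] at hx
    have hv := congrArg Fin.val hx
    by_cases h : (x : ℕ) < 2 * k
    · rw [kappaFun_val_pos k ρ x h] at hv; omega
    · rw [kappaFun_val_neg k ρ x h] at hv
      have := (ρ (⟨(x : ℕ) - 2 * k, by have := x.isLt; omega⟩ : Fin (2 * k))).isLt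
      omega
  have hiff := H (4 * k) κ hκinv hκfpf
  -- κ classically contains ρ via the first-half embedding
  have hclass : ∃ f : Fin (2 * k) → Fin (4 * k), StrictMono f ∧
      ∀ a b : Fin (2 * k), κ (f a) < κ (f b) ↔ ρ a < ρ b := by
    refine ⟨fun a => ⟨(a : ℕ), by have := a.isLt; omega⟩, ?_, ?_⟩
    · intro x y hxy
      exact Fin.mk_lt_mk.mpr hxy
    · intro x y
      have hx : ((⟨(x : ℕ), by have := x.isLt; omega⟩ : Fin (4 * k)) : ℕ) < 2 * k := x.isLt
      have hy : ((⟨(y : ℕ), by have := y.isLt; omega⟩ : Fin (4 * k)) : ℕ) < 2 * k := y.isLt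
      rw [Fin.lt_def, Fin.lt_def, hκcoe,
        kappaFun_val_pos k ρ _ hx, kappaFun_val_pos k ρ _ hy]
      simp only [Fin.val_mk, Fin.eta]
      omega
  obtain ⟨g, hgmono, hgcomm⟩ := hiff.mp hclass
  -- each pair of ρ must be mapped by g across the boundary 2k
  have key : ∀ x y : Fin (2 * k), x < y → ρ x = y →
      (g x : ℕ) < 2 * k ∧ 2 * k ≤ (g y : ℕ) := by
    intro x y hxy hrxy
    have hgxy : g x < g y := hgmono hxy
    have hcomm := hgcomm x
    rw [hrxy] at hcomm
    have hv := congrArg Fin.val hcomm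
    rw [hκcoe] at hv
    by_cases h : (g x : ℕ) < 2 * k
    · rw [kappaFun_val_pos k ρ _ h] at hv
      exact ⟨h, by omega⟩
    · rw [kappaFun_val_neg k ρ _ h] at hv
      have := (ρ (⟨((g x : Fin (4 * k)) : ℕ) - 2 * k, by
        have := (g x).isLt; omega⟩ : Fin (2 * k))).isLt
      rw [Fin.lt_def] at hgxy
      omega
  have h1 := key a b hab hrab
  have h2 := key c d hcd hrcd
  have hbc : g b < g c := hgmono (by rw [Fin.lt_def]; omega)
  rw [Fin.lt_def] at hbc
  omega
end

section
/- If a fixed-point-free involution pattern ρ of [2k] I-contains 2143 (i.e., ρ has two 2-cycles (a,b),(c,d) with a < b < c < d), then for every n the number of fixed-point-free involutions of [2n] that I-avoid ρ is at least n!. -/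
/-- If a fixed-point-free involution pattern `ρ` of `[2k]` I-contains 2143, i.e. has
two 2-cycles `(a,b)`, `(c,d)` with `a < b < c < d`, then for every `n` the number of
fixed-point-free involutions of `[2n]` I-avoiding `ρ` is at least `n!`. -/
theorem Iavoiders_factorial_lower_bound (k : ℕ) (ρ : Equiv.Perm (Fin (2 * k)))
    (hρ : Function.Involutive ⇑ρ) (hfpf : ∀ i, ρ i ≠ i)
    (h2143 : ∃ a c : Fin (2 * k), a < ρ a ∧ c < ρ c ∧ ρ a < c) :
    ∀ n : ℕ, Nat.factorial n ≤
      Nat.card {κ : Equiv.Perm (Fin (2 * n)) // Function.Involutive ⇑κ ∧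
        (∀ i, κ i ≠ i) ∧
        ¬ ∃ f : Fin (2 * k) → Fin (2 * n), StrictMono f ∧ ∀ a, κ (f a) = f (ρ a)} := by
  intro n
  classical
  set e : Fin n ⊕ Fin n ≃ Fin (2 * n) := finSumFinEquiv.trans (finCongr (two_mul n).symm)
    with he
  set K : Equiv.Perm (Fin n) → Equiv.Perm (Fin (2 * n)) := fun σ =>
    Equiv.permCongr e ((Equiv.sumCongr σ σ.symm).trans (Equiv.sumComm _ _)) with hKdef
  have hK1 : ∀ (σ : Equiv.Perm (Fin n)) (i : Fin n),
      K σ (e (Sum.inl i)) = e (Sum.inr (σ i)) := by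
    intro σ i; simp [hKdef, Equiv.permCongr_apply]
  have hK2 : ∀ (σ : Equiv.Perm (Fin n)) (j : Fin n),
      K σ (e (Sum.inr j)) = e (Sum.inl (σ.symm j)) := by
    intro σ j; simp [hKdef, Equiv.permCongr_apply]
  have hval1 : ∀ i : Fin n, ((e (Sum.inl i) : Fin (2 * n)) : ℕ) = (i : ℕ) := by
    intro i; simp [he]
  have hval2 : ∀ j : Fin n, ((e (Sum.inr j) : Fin (2 * n)) : ℕ) = n + (j : ℕ) := by
    intro j; simp [he, Nat.add_comm]
  -- key half lemma
  have hhalf : ∀ (σ : Equiv.Perm (Fin n)) (x : Fin (2 * n)),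
      ((x : ℕ) < (K σ x : ℕ)) → (x : ℕ) < n ∧ n ≤ (K σ x : ℕ) := by
    intro σ x hx
    rcases h : e.symm x with i | j
    · have hx' : x = e (Sum.inl i) := by rw [← h, Equiv.apply_symm_apply]
      rw [hx'] at hx ⊢
      rw [hK1, hval1, hval2] at *
      exact ⟨i.isLt, Nat.le_add_right _ _⟩
    · have hx' : x = e (Sum.inr j) := by rw [← h, Equiv.apply_symm_apply]
      rw [hx'] at hx
      rw [hK2, hval1, hval2] at hx
      omega
  have hmem : ∀ σ : Equiv.Perm (Fin n),
      Function.Involutive ⇑(K σ) ∧ (∀ i, K σ i ≠ i) ∧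
      ¬ ∃ f : Fin (2 * k) → Fin (2 * n), StrictMono f ∧ ∀ a, K σ (f a) = f (ρ a) := by
    intro σ
    refine ⟨?_, ?_, ?_⟩
    · intro x
      rcases h : e.symm x with i | j
      · have hx' : x = e (Sum.inl i) := by rw [← h, Equiv.apply_symm_apply]
        rw [hx', hK1, hK2]; simp
      · have hx' : x = e (Sum.inr j) := by rw [← h, Equiv.apply_symm_apply]
        rw [hx', hK2, hK1]; simp
    · intro x hx
      rcases h : e.symm x with i | j
      · have hx' : x = e (Sum.inl i) := by rw [← h, Equiv.apply_symm_apply]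
        rw [hx', hK1] at hx
        have := congrArg Fin.val hx
        rw [hval1, hval2] at this
        omega
      · have hx' : x = e (Sum.inr j) := by rw [← h, Equiv.apply_symm_apply]
        rw [hx', hK2] at hx
        have := congrArg Fin.val hx
        rw [hval1, hval2] at this
        omega
    · rintro ⟨f, hf, hfa⟩
      obtain ⟨a, c, h1, h2, h3⟩ := h2143
      have ha : (f a : ℕ) < (K σ (f a) : ℕ) := by
        rw [hfa a]; exact hf h1
      have hc : (f c : ℕ) < (K σ (f c) : ℕ) := by
        rw [hfa c]; exact hf h2
      have HA := hhalf σ (f a) ha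
      have HC := hhalf σ (f c) hc
      have h4 : (K σ (f a) : ℕ) < (f c : ℕ) := by
        rw [hfa a]; exact hf h3
      omega
  have hinj : Function.Injective (fun σ : Equiv.Perm (Fin n) =>
      (⟨K σ, hmem σ⟩ : {κ : Equiv.Perm (Fin (2 * n)) // Function.Involutive ⇑κ ∧
        (∀ i, κ i ≠ i) ∧
        ¬ ∃ f : Fin (2 * k) → Fin (2 * n), StrictMono f ∧ ∀ a, κ (f a) = f (ρ a)})) := by
    intro σ τ hst
    have hKe : K σ = K τ := congrArg Subtype.val hst
    ext i
    have this : K σ (e (Sum.inl i)) = K τ (e (Sum.inl i)) := by rw [hKe]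
    rw [hK1, hK1] at this
    exact congrArg Fin.val (by simpa using e.injective this)
  calc Nat.factorial n = Nat.card (Equiv.Perm (Fin n)) := by
        simp [Nat.card_eq_fintype_card, Fintype.card_perm]
    _ ≤ _ := Nat.card_le_card_of_injective _ hinj
end
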